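/- arXiv:math/0601409 — 13 statements merged into one kernel-verified Lean document; each statement's English description precedes it below -/
import Mathlib

section
/- Let k, l, n be positive integers with l < n, and let Δ : [1,n] → {0,1} be a 2-coloring such that the equation k·x + l·y = z has no monochromatic solution with x, y, z ∈ [1,n]. Suppose u ∈ [1, n−l] satisfies Δ(u) = δ and Δ(u+l) = 1−δ. If w is a positive integer with w ≤ (n − k·u)/l and Δ(w) = δ, then for every h ∈ ℕ with w − h·k > 0 we have Δ(w − h·k) = δ. -/
theorem lemma21_i (k l n : ℕ) (hk : 0 < k) (hl : 0 < l) (hln : l < n)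
    (Δ : ℕ → ℕ) (hΔ : ∀ i ∈ Finset.Icc 1 n, Δ i ≤ 1)
    (hno : ¬ ∃ x ∈ Finset.Icc 1 n, ∃ y ∈ Finset.Icc 1 n, ∃ z ∈ Finset.Icc 1 n,
      k * x + l * y = z ∧ Δ x = Δ y ∧ Δ y = Δ z)
    (δ u : ℕ) (hδ : δ ≤ 1) (hu : u ∈ Finset.Icc 1 (n - l))
    (hΔu : Δ u = δ) (hΔul : Δ (u + l) = 1 - δ)
    (w : ℕ) (hw : 0 < w) (hwn : k * u + l * w ≤ n) (hΔw : Δ w = δ)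
    (h : ℕ) (hh : 0 < w - h * k) :
    Δ (w - h * k) = δ := by
  simp only [Finset.mem_Icc] at hu
  induction h with
  | zero => simpa using hΔw
  | succ h ih =>
    have hmul : (h + 1) * k = h * k + k := by ring
    have hpos : 0 < w - h * k := by omega
    have ihΔ := ih hpos
    set w' := w - h * k with hw'
    have hw'k : k < w' := by omega
    have hw'w : w' ≤ w := by omega
    -- bounds
    have hun : 1 ≤ u ∧ u + l ≤ n := by omega
    have hwln : l * w' ≤ l * w := Nat.mul_le_mul_left l hw'w
    have hzn : k * u + l * w' ≤ n := by omega
    have hz1 : 1 ≤ k * u + l * w' := by nlinarith [hun.1]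
    have hwn' : w ≤ n := by nlinarith
    have hmemu : u ∈ Finset.Icc 1 n := by simp [Finset.mem_Icc]; omega
    have hmemul : u + l ∈ Finset.Icc 1 n := by simp [Finset.mem_Icc]; omega
    have hmemw' : w' ∈ Finset.Icc 1 n := by simp [Finset.mem_Icc]; omega
    have hmemz : k * u + l * w' ∈ Finset.Icc 1 n := by simp [Finset.mem_Icc]; omega
    have hmemwk : w' - k ∈ Finset.Icc 1 n := by simp [Finset.mem_Icc]; omega
    have hΔz : Δ (k * u + l * w') = 1 - δ := by
      have hle := hΔ _ hmemz
      by_contra hne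
      have : Δ (k * u + l * w') = δ := by omega
      exact hno ⟨u, hmemu, w', hmemw', k * u + l * w', hmemz, rfl, by omega, by omega⟩
    -- key: equation with x = u + l, y = w' - k
    have heq : k * (u + l) + l * (w' - k) = k * u + l * w' := by
      obtain ⟨m, hm⟩ : ∃ m, w' = m + k := ⟨w' - k, by omega⟩
      rw [hm, Nat.add_sub_cancel]
      ring
    have hΔwk : Δ (w' - k) = δ := by
      have hle := hΔ _ hmemwk
      by_contra hne
      have : Δ (w' - k) = 1 - δ := by omega
      exact hno ⟨u + l, hmemul, w' - k, hmemwk, k * u + l * w', hmemz, heq, by omega, by omega⟩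
    have : w - (h + 1) * k = w' - k := by omega
    rw [this]
    exact hΔwk
end

section
/- Let k, l, n be positive integers with l < n, and let Δ : [1,n] → {0,1} be a 2-coloring such that the equation k·x + l·y = z has no monochromatic solution with x, y, z ∈ [1,n]. Suppose u ∈ [1, n−l] satisfies Δ(u) = δ and Δ(u+l) = 1−δ. If w ∈ [1,n] with Δ(w) = 1−δ, then for every h ∈ ℕ with w + h·k ≤ (n − k·u)/l we have Δ(w + h·k) = 1−δ. -/
theorem lemma21_ii (k l n : ℕ) (hk : 0 < k) (hl : 0 < l) (hln : l < n)
    (Δ : ℕ → ℕ) (hΔ : ∀ i ∈ Finset.Icc 1 n, Δ i ≤ 1)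
    (hno : ¬ ∃ x ∈ Finset.Icc 1 n, ∃ y ∈ Finset.Icc 1 n, ∃ z ∈ Finset.Icc 1 n,
      k * x + l * y = z ∧ Δ x = Δ y ∧ Δ y = Δ z)
    (δ u : ℕ) (hδ : δ ≤ 1) (hu : u ∈ Finset.Icc 1 (n - l))
    (hΔu : Δ u = δ) (hΔul : Δ (u + l) = 1 - δ)
    (w : ℕ) (hw : w ∈ Finset.Icc 1 n) (hΔw : Δ w = 1 - δ)
    (h : ℕ) (hh : k * u + l * (w + h * k) ≤ n) :
    Δ (w + h * k) = 1 - δ := by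
  simp only [Finset.mem_Icc] at hu hw
  push_neg at hno
  induction h with
  | zero => simpa using hΔw
  | succ h ih =>
    have hh' : k * u + l * (w + h * k) ≤ n := by
      refine le_trans ?_ hh
      have : w + h * k ≤ w + (h + 1) * k := by nlinarith
      nlinarith
    have hprev : Δ (w + h * k) = 1 - δ := ih hh'
    set z := k * u + l * (w + (h + 1) * k) with hz
    have hku : 0 < k * u := Nat.mul_pos hk (by omega)
    have hy1 : w + h * k ≤ l * (w + h * k) := Nat.le_mul_of_pos_left _ hl
    have hy2 : w + (h + 1) * k ≤ l * (w + (h + 1) * k) := Nat.le_mul_of_pos_left _ hl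
    have hymem : w + h * k ∈ Finset.Icc 1 n := by
      simp only [Finset.mem_Icc]; omega
    have hymem' : w + (h + 1) * k ∈ Finset.Icc 1 n := by
      simp only [Finset.mem_Icc]; omega
    have hzmem : z ∈ Finset.Icc 1 n := by
      simp only [Finset.mem_Icc]; omega
    have hulmem : u + l ∈ Finset.Icc 1 n := by
      simp only [Finset.mem_Icc]; omega
    have humem : u ∈ Finset.Icc 1 n := by
      simp only [Finset.mem_Icc]; omega
    -- equation with x = u + l, y = w + h*k gives z
    have heq1 : k * (u + l) + l * (w + h * k) = z := by rw [hz]; ring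
    have hΔz : Δ z ≠ 1 - δ := by
      intro hc
      exact hno (u + l) hulmem (w + h * k) hymem z hzmem heq1
        (by rw [hΔul, hprev]) (by rw [hprev, hc])
    have hΔz' : Δ z = δ := by
      have := hΔ z hzmem
      omega
    by_contra hc
    have hΔy' : Δ (w + (h + 1) * k) = δ := by
      have := hΔ (w + (h + 1) * k) hymem'
      omega
    exact hno u humem (w + (h + 1) * k) hymem' z hzmem rfl
      (by rw [hΔu, hΔy']) (by rw [hΔy', hΔz'])
end

section
/- Let a, b, n be positive integers with a ≤ b, v = a + b, and n ≥ a·v² + b. Suppose Δ : [1,n] → {0,1} is a 2-coloring with Δ(1) = 0 such that a·x + b·y = z has no monochromatic solution with x,y,z ∈ [1,n]. Then Δ(v) = 1, Δ(v²) = 0, and Δ(a·v² + b) = 1. -/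
theorem claim_basic (a b n : ℕ) (ha : 0 < a) (hab : a ≤ b)
    (hn : a * (a + b) ^ 2 + b ≤ n)
    (Δ : ℕ → ℕ) (hΔ : ∀ i ∈ Finset.Icc 1 n, Δ i ≤ 1) (h1 : Δ 1 = 0)
    (hno : ¬ ∃ x ∈ Finset.Icc 1 n, ∃ y ∈ Finset.Icc 1 n, ∃ z ∈ Finset.Icc 1 n,
      a * x + b * y = z ∧ Δ x = Δ y ∧ Δ y = Δ z) :
    Δ (a + b) = 1 ∧ Δ ((a + b) ^ 2) = 0 ∧ Δ (a * (a + b) ^ 2 + b) = 1 := by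
  push_neg at hno
  have hb : 0 < b := lt_of_lt_of_le ha hab
  have h1n : 1 ∈ Finset.Icc 1 n := by
    simp only [Finset.mem_Icc]
    constructor
    · exact le_refl 1
    · nlinarith [sq_nonneg (a + b)]
  have hvn : (a + b) ∈ Finset.Icc 1 n := by
    simp only [Finset.mem_Icc]
    constructor
    · omega
    · nlinarith
  have hv2n : ((a + b) ^ 2) ∈ Finset.Icc 1 n := by
    simp only [Finset.mem_Icc]
    constructor
    · nlinarith
    · nlinarith
  have hzn : (a * (a + b) ^ 2 + b) ∈ Finset.Icc 1 n := by
    simp only [Finset.mem_Icc]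
    constructor
    · nlinarith
    · exact hn
  have hΔv : Δ (a + b) = 1 := by
    by_contra h
    have hle := hΔ _ hvn
    have h0 : Δ (a + b) = 0 := by omega
    exact hno 1 h1n 1 h1n (a + b) hvn (by ring) (by rw [h1]) (by rw [h1, h0])
  have hΔv2 : Δ ((a + b) ^ 2) = 0 := by
    by_contra h
    have hle := hΔ _ hv2n
    have h0 : Δ ((a + b) ^ 2) = 1 := by omega
    exact hno (a + b) hvn (a + b) hvn ((a + b) ^ 2) hv2n (by ring) rfl (by rw [hΔv, h0])
  have hΔz : Δ (a * (a + b) ^ 2 + b) = 1 := by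
    by_contra h
    have hle := hΔ _ hzn
    have h0 : Δ (a * (a + b) ^ 2 + b) = 0 := by omega
    exact hno ((a + b) ^ 2) hv2n 1 h1n (a * (a + b) ^ 2 + b) hzn (by ring)
      (by rw [hΔv2, h1]) (by rw [h1, h0])
  exact ⟨hΔv, hΔv2, hΔz⟩
end

section
/- Let a, b, n be positive integers with a ≤ b, v = a + b, and n ≥ a·v² + b. Suppose Δ : [1,n] → {0,1} is a 2-coloring with Δ(1) = 0 such that a·x + b·y = z has no monochromatic solution with x,y,z ∈ [1,n]. Then Δ(a) = Δ(b) and Δ(a·v) = Δ(b·v) = 1 − Δ(a). -/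
theorem claim21 (a b n : ℕ) (ha : 0 < a) (hab : a ≤ b)
    (hn : a * (a + b) ^ 2 + b ≤ n)
    (Δ : ℕ → ℕ) (hΔ : ∀ i ∈ Finset.Icc 1 n, Δ i ≤ 1) (h1 : Δ 1 = 0)
    (hno : ¬ ∃ x ∈ Finset.Icc 1 n, ∃ y ∈ Finset.Icc 1 n, ∃ z ∈ Finset.Icc 1 n,
      a * x + b * y = z ∧ Δ x = Δ y ∧ Δ y = Δ z) :
    Δ a = Δ b ∧ Δ (a * (a + b)) = 1 - Δ a ∧ Δ (b * (a + b)) = 1 - Δ a := by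
  push_neg at hno
  have hb : 0 < b := ha.trans_le hab
  have ma : a ∈ Finset.Icc 1 n := by
    simp only [Finset.mem_Icc]; constructor
    · omega
    · nlinarith
  have mb : b ∈ Finset.Icc 1 n := by
    simp only [Finset.mem_Icc]; constructor
    · omega
    · nlinarith
  have mav : a * (a + b) ∈ Finset.Icc 1 n := by
    simp only [Finset.mem_Icc]; constructor
    · nlinarith
    · nlinarith
  have mbv : b * (a + b) ∈ Finset.Icc 1 n := by
    simp only [Finset.mem_Icc]; constructor
    · nlinarith
    · nlinarith
  have mz : a * b * (a + b + 1) ∈ Finset.Icc 1 n := by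
    simp only [Finset.mem_Icc]; constructor
    · exact Nat.one_le_iff_ne_zero.mpr (by positivity)
    · nlinarith
  have e1 : a * a + b * a = a * (a + b) := by ring
  have e2 : a * b + b * b = b * (a + b) := by ring
  have e3 : a * (b * (a + b)) + b * a = a * b * (a + b + 1) := by ring
  have e4 : a * b + b * (a * (a + b)) = a * b * (a + b + 1) := by ring
  have h1' := hno a ma a ma (a * (a + b)) mav e1
  have h2' := hno b mb b mb (b * (a + b)) mbv e2
  have ba := hΔ a ma
  have bb := hΔ b mb
  have bav := hΔ _ mav
  have bbv := hΔ _ mbv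
  have bz := hΔ _ mz
  have key : Δ a = Δ b := by
    by_contra hne
    have h3' := hno (b * (a + b)) mbv a ma (a * b * (a + b + 1)) mz e3
    have h4' := hno b mb (a * (a + b)) mav (a * b * (a + b + 1)) mz e4
    omega
  refine ⟨key, ?_, ?_⟩ <;> omega
end

section
/- Let a, b, n be positive integers with a ≤ b, v = a + b, a dividing b·(b−1), and n ≥ a·v² + b. Suppose Δ : [1,n] → {0,1} is a 2-coloring with Δ(1) = 0, Δ(a) = Δ(b) = δ, Δ(v) = 1, and a·x + b·y = z has no monochromatic solution in [1,n]. Then for every i ∈ {1,…,a}, Δ(i·b·(v−1) + a·b + b + (1−δ)·a·v) = 0. -/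
theorem claim23 (a b n δ : ℕ) (ha : 0 < a) (hab : a ≤ b) (hδ : δ ≤ 1)
    (hdvd : a ∣ b * (b - 1)) (hn : a * (a + b) ^ 2 + b ≤ n)
    (Δ : ℕ → ℕ) (hΔ : ∀ i ∈ Finset.Icc 1 n, Δ i ≤ 1)
    (h1 : Δ 1 = 0) (hΔa : Δ a = δ) (hΔb : Δ b = δ) (hΔv : Δ (a + b) = 1)
    (hno : ¬ ∃ x ∈ Finset.Icc 1 n, ∃ y ∈ Finset.Icc 1 n, ∃ z ∈ Finset.Icc 1 n,
      a * x + b * y = z ∧ Δ x = Δ y ∧ Δ y = Δ z) :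
    ∀ i ∈ Finset.Icc 1 a,
      Δ (i * b * (a + b - 1) + a * b + b + (1 - δ) * a * (a + b)) = 0 := by
  intro i hi
  rw [Finset.mem_Icc] at hi
  have hb : 0 < b := lt_of_lt_of_le ha hab
  -- the main "no monochromatic solution" tool
  have H : ∀ x y z : ℕ, a * x + b * y = z → 1 ≤ x → 1 ≤ y → z ≤ n →
      Δ x = Δ y → Δ z ≠ Δ x := by
    intro x y z hxyz hx hy hzn hxy hzx
    apply hno
    have hxz : x ≤ z := by
      calc x ≤ a * x := Nat.le_mul_of_pos_left x ha
        _ ≤ a * x + b * y := Nat.le_add_right _ _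
        _ = z := hxyz
    have hyz : y ≤ z := by
      calc y ≤ b * y := Nat.le_mul_of_pos_left y hb
        _ ≤ a * x + b * y := Nat.le_add_left _ _
        _ = z := hxyz
    exact ⟨x, Finset.mem_Icc.mpr ⟨hx, hxz.trans hzn⟩,
      y, Finset.mem_Icc.mpr ⟨hy, hyz.trans hzn⟩,
      z, Finset.mem_Icc.mpr ⟨hx.trans hxz, hzn⟩,
      hxyz, hxy, hxy.symm.trans hzx.symm⟩
  -- divisibility: a ∣ b*(a+b-1)
  obtain ⟨c, hc⟩ : a ∣ b * (a + b - 1) := by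
    have e1 : b * (a + b - 1) = a * b + b * (b - 1) := by
      have e2 : a + b - 1 = a + (b - 1) := by omega
      rw [e2, Nat.mul_add, Nat.mul_comm b a]
    rw [e1]
    exact dvd_add (dvd_mul_right a b) hdvd
  have hbv : b * (a + b) = a * c + b := by
    have e3 : a + b - 1 + 1 = a + b := by omega
    calc b * (a + b) = b * (a + b - 1 + 1) := by rw [e3]
      _ = b * (a + b - 1) + b := by ring
      _ = a * c + b := by rw [hc]
  -- Δ((a+b)²) = 0
  have hn' : a * ((a + b) * (a + b)) + b ≤ n := by rw [pow_two] at hn; exact hn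
  have hv2n : (a + b) * (a + b) ≤ n := by
    calc (a + b) * (a + b) ≤ a * ((a + b) * (a + b)) :=
          Nat.le_mul_of_pos_left _ ha
      _ ≤ a * ((a + b) * (a + b)) + b := Nat.le_add_right _ _
      _ ≤ n := hn'
  have hΔv2 : Δ ((a + b) * (a + b)) = 0 := by
    have hne := H (a + b) (a + b) ((a + b) * (a + b)) (by ring) (by omega) (by omega) hv2n rfl
    rw [hΔv] at hne
    have hle := hΔ _ (Finset.mem_Icc.mpr ⟨by nlinarith, hv2n⟩)
    omega
  -- the seed of the chain is colored 1
  have ht0 : Δ (b + (1 - δ) * (a + b)) = 1 := by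
    rcases (by omega : δ = 0 ∨ δ = 1) with h | h
    · subst h
      simp only [Nat.sub_zero, one_mul]
      have hbvn : b + (a + b) ≤ n := by
        calc b + (a + b) ≤ (a + b) + (a + b) := by omega
          _ = (a + b) * 2 := by ring
          _ ≤ (a + b) * (a + b) := by gcongr; omega
          _ ≤ n := hv2n
      have hne : Δ (b + (a + b)) ≠ 0 := by
        intro h0
        have h' := H (b + (a + b)) b ((a + b) * (a + b)) (by ring) (by omega) hb hv2n
          (by rw [h0, hΔb])
        exact h' (hΔv2.trans h0.symm)
      have hle := hΔ _ (Finset.mem_Icc.mpr ⟨by omega, hbvn⟩)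
      omega
    · subst h
      simpa using hΔb
  -- range bound for the chain elements
  have zb : ∀ e k : ℕ, e ≤ 1 → k + 1 ≤ a →
      a * (b + e * (a + b) + k * c) + b * (a + b) ≤ n := by
    intro e k he hk
    have s1 : a * (b + e * (a + b) + k * c) + b * (a + b)
        ≤ a * (b + 1 * (a + b) + k * c) + b * (a + b) := by gcongr
    have s2 : a * (b + 1 * (a + b) + k * c) + b * (a + b)
        = a * (a + b) + (k + 1) * (a * c) + (a * b + b) := by
      calc a * (b + 1 * (a + b) + k * c) + b * (a + b)
          = a * b + a * (a + b) + k * (a * c) + b * (a + b) := by ring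
        _ = a * b + a * (a + b) + k * (a * c) + (a * c + b) := by rw [hbv]
        _ = a * (a + b) + (k + 1) * (a * c) + (a * b + b) := by ring
    have s3 : a * (a + b) + (k + 1) * (a * c) + (a * b + b)
        ≤ a * (a + b) + a * (a * c) + (a * b + b) := by gcongr
    have s4 : a * (a + b) + a * (a * c) + (a * b + b)
        = a * ((a + b) * (1 + b)) + b := by
      calc a * (a + b) + a * (a * c) + (a * b + b)
          = a * (a + b) + a * (a * c + b) + b := by ring
        _ = a * (a + b) + a * (b * (a + b)) + b := by rw [hbv]
        _ = a * ((a + b) * (1 + b)) + b := by ring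
    have s5 : a * ((a + b) * (1 + b)) + b ≤ a * ((a + b) * (a + b)) + b := by
      gcongr <;> omega
    calc a * (b + e * (a + b) + k * c) + b * (a + b)
        ≤ a * (b + 1 * (a + b) + k * c) + b * (a + b) := s1
      _ = a * (a + b) + (k + 1) * (a * c) + (a * b + b) := s2
      _ ≤ a * (a + b) + a * (a * c) + (a * b + b) := s3
      _ = a * ((a + b) * (1 + b)) + b := s4
      _ ≤ a * ((a + b) * (a + b)) + b := s5
      _ ≤ n := hn'
  -- the chain: Δ(b + (1-δ)(a+b) + k·c) = 1 for k < a
  have chain : ∀ k, k + 1 ≤ a → Δ (b + (1 - δ) * (a + b) + k * c) = 1 := by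
    intro k
    induction k with
    | zero => intro _; simpa using ht0
    | succ k ih =>
      intro hk
      have hΔt : Δ (b + (1 - δ) * (a + b) + k * c) = 1 := ih (by omega)
      set t := b + (1 - δ) * (a + b) + k * c with htdef
      have h1t : 1 ≤ t := by
        calc 1 ≤ b := hb
          _ ≤ b + (1 - δ) * (a + b) + k * c := by
              exact le_trans (Nat.le_add_right _ _) (Nat.le_add_right _ _)
          _ = t := htdef.symm
      have htn : a * t + b * (a + b) ≤ n := zb (1 - δ) k (by omega) (by omega)
      have h1z : 1 ≤ a * t + b * (a + b) := by
        calc 1 ≤ t := h1t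
          _ ≤ a * t := Nat.le_mul_of_pos_left t ha
          _ ≤ a * t + b * (a + b) := Nat.le_add_right _ _
      have hz0 : Δ (a * t + b * (a + b)) = 0 := by
        have hne := H t (a + b) (a * t + b * (a + b)) rfl h1t (by omega) htn
          (by rw [hΔt, hΔv])
        rw [hΔt] at hne
        have hle := hΔ _ (Finset.mem_Icc.mpr ⟨h1z, htn⟩)
        omega
      have heq : a * (t + c) + b * 1 = a * t + b * (a + b) := by
        rw [hbv]; ring
      have hne0 : Δ (t + c) ≠ 0 := by
        intro h0'
        have h' := H (t + c) 1 (a * t + b * (a + b)) heq (by omega) le_rfl htn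
          (by rw [h0', h1])
        exact h' (hz0.trans h0'.symm)
      have htcn : t + c ≤ n := by
        calc t + c ≤ a * (t + c) := Nat.le_mul_of_pos_left _ ha
          _ ≤ a * (t + c) + b * 1 := Nat.le_add_right _ _
          _ = a * t + b * (a + b) := heq
          _ ≤ n := htn
      have hle := hΔ (t + c) (Finset.mem_Icc.mpr ⟨by omega, htcn⟩)
      have hgoal : b + (1 - δ) * (a + b) + (k + 1) * c = t + c := by
        rw [htdef]; ring
      rw [hgoal]
      omega
  -- putting it together
  have hkey : i * b * (a + b - 1) + a * b + b + (1 - δ) * a * (a + b)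
      = a * (b + (1 - δ) * (a + b) + (i - 1) * c) + b * (a + b) := by
    have e4 : i - 1 + 1 = i := by omega
    calc i * b * (a + b - 1) + a * b + b + (1 - δ) * a * (a + b)
        = i * (b * (a + b - 1)) + a * b + b + (1 - δ) * a * (a + b) := by ring
      _ = i * (a * c) + a * b + b + (1 - δ) * a * (a + b) := by rw [hc]
      _ = (i - 1 + 1) * (a * c) + a * b + b + (1 - δ) * a * (a + b) := by rw [e4]
      _ = a * (b + (1 - δ) * (a + b) + (i - 1) * c) + (a * c + b) := by ring
      _ = a * (b + (1 - δ) * (a + b) + (i - 1) * c) + b * (a + b) := by rw [hbv]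
  rw [hkey]
  have hΔt : Δ (b + (1 - δ) * (a + b) + (i - 1) * c) = 1 := chain (i - 1) (by omega)
  have htn : a * (b + (1 - δ) * (a + b) + (i - 1) * c) + b * (a + b) ≤ n :=
    zb (1 - δ) (i - 1) (by omega) (by omega)
  have h1t : 1 ≤ b + (1 - δ) * (a + b) + (i - 1) * c := by
    exact le_trans hb (le_trans (Nat.le_add_right _ _) (Nat.le_add_right _ _))
  have h1z : 1 ≤ a * (b + (1 - δ) * (a + b) + (i - 1) * c) + b * (a + b) := by
    calc 1 ≤ b + (1 - δ) * (a + b) + (i - 1) * c := h1t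
      _ ≤ a * (b + (1 - δ) * (a + b) + (i - 1) * c) := Nat.le_mul_of_pos_left _ ha
      _ ≤ a * (b + (1 - δ) * (a + b) + (i - 1) * c) + b * (a + b) := Nat.le_add_right _ _
  have hne := H (b + (1 - δ) * (a + b) + (i - 1) * c) (a + b)
    (a * (b + (1 - δ) * (a + b) + (i - 1) * c) + b * (a + b)) rfl h1t (by omega) htn
    (by rw [hΔt, hΔv])
  rw [hΔt] at hne
  have hle := hΔ _ (Finset.mem_Icc.mpr ⟨h1z, htn⟩)
  omega
end

section
/- Let a, b, n be positive integers with a ≤ b, v = a + b, a not dividing b, and n ≥ a·v² + b. Suppose Δ : [1,n] → {0,1} is a 2-coloring with Δ(1) = Δ(a) = Δ(b) = 0 such that a·x + b·y = z has no monochromatic solution in [1,n]. Then Δ(a·i + b·j) = 1 for all i, j ∈ {1,…,a}. -/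
private lemma claim31_aux (a b n : ℕ) (ha : 0 < a) (hab : a ≤ b)
    (hn : a * (a + b) ^ 2 + b ≤ n)
    (Δ : ℕ → ℕ) (hΔ : ∀ i ∈ Finset.Icc 1 n, Δ i ≤ 1)
    (h1 : Δ 1 = 0) (hΔa : Δ a = 0) (hΔb : Δ b = 0)
    (hno : ¬ ∃ x ∈ Finset.Icc 1 n, ∃ y ∈ Finset.Icc 1 n, ∃ z ∈ Finset.Icc 1 n,
      a * x + b * y = z ∧ Δ x = Δ y ∧ Δ y = Δ z) :
    ∀ m i j, i + j = m → 1 ≤ i → i ≤ a → 1 ≤ j → j ≤ a → Δ (a * i + b * j) ≠ 0 := by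
  have hb1 : 1 ≤ b := le_trans ha hab
  have hvn : a + b ≤ n := by nlinarith [sq_nonneg (a+b)]
  have h1n : 1 ≤ n := by omega
  have han : a ≤ n := by omega
  have hbn : b ≤ n := by omega
  have hAv : a * (a + b) ≤ n := by
    nlinarith [Nat.mul_le_mul_left (a * (a + b)) (show 1 ≤ a + b by omega)]
  have hB1 : ∀ z, z ≤ a * (a + b) → a * a + b * z ≤ n := by
    intro z hz
    nlinarith [Nat.mul_le_mul_left b hz]
  have hB2 : ∀ z, z ≤ a * (a + b) → a * z + b * b ≤ n := by
    intro z hz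
    nlinarith [Nat.mul_le_mul_left a hz, Nat.mul_le_mul_right (b * b) (show 1 ≤ a by omega)]
  have hzb : ∀ i j, i ≤ a → j ≤ a → a * i + b * j ≤ a * (a + b) := by
    intro i j hia hja
    calc a * i + b * j ≤ a * a + b * a :=
          Nat.add_le_add (Nat.mul_le_mul_left a hia) (Nat.mul_le_mul_left b hja)
      _ = a * (a + b) := by ring
  have hz1 : ∀ i j, 1 ≤ i → 1 ≤ a * i + b * j := by
    intro i j hi1
    have : 1 * 1 ≤ a * i := Nat.mul_le_mul ha hi1
    omega
  have key : ∀ x y : ℕ, 1 ≤ x → x ≤ n → 1 ≤ y → y ≤ n → a * x + b * y ≤ n →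
      Δ x = Δ y → ¬ Δ (a * x + b * y) = Δ x := by
    intro x y hx1 hxn hy1 hyn hzn hxy hz
    have hxx : 1 * 1 ≤ a * x := Nat.mul_le_mul ha hx1
    exact hno ⟨x, Finset.mem_Icc.mpr ⟨hx1, hxn⟩, y, Finset.mem_Icc.mpr ⟨hy1, hyn⟩,
      a * x + b * y, Finset.mem_Icc.mpr ⟨by omega, hzn⟩, rfl, hxy, by omega⟩
  have hΔv : Δ (a + b) = 1 := by
    have h := key 1 1 le_rfl h1n le_rfl h1n (by omega) rfl
    rw [mul_one, mul_one] at h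
    have h2 := hΔ (a + b) (Finset.mem_Icc.mpr ⟨by omega, hvn⟩)
    omega
  intro m
  induction m using Nat.strong_induction_on with
  | _ m IH =>
    intro i j hm hi1 hia hj1 hja h0
    have hzbm : a * i + b * j ≤ a * (a + b) := hzb i j hia hja
    have hzn : a * i + b * j ≤ n := le_trans hzbm hAv
    have hz1m : 1 ≤ a * i + b * j := hz1 i j hi1
    rcases Nat.lt_or_ge i 2 with hi2 | hi2
    · rcases Nat.lt_or_ge j 2 with hj2 | hj2
      · -- i = 1, j = 1
        have hi : i = 1 := by omega
        have hj : j = 1 := by omega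
        rw [hi, hj, mul_one, mul_one] at h0
        omega
      · -- j ≥ 2 : reduce j
        obtain ⟨j', rfl⟩ : ∃ j', j = j' + 2 := ⟨j - 2, by omega⟩
        have hw1 : 1 ≤ a * i + b * (j' + 1) := hz1 i (j' + 1) hi1
        have hwn : a * i + b * (j' + 1) ≤ n :=
          le_trans (hzb i (j' + 1) hia (by omega)) hAv
        have hAbd : a * (a * i + b * (j' + 2)) + b * b ≤ n := hB2 _ hzbm
        have hA := key (a * i + b * (j' + 2)) b hz1m hzn hb1 hbn hAbd (by omega)
        have hA1lb : 1 * 1 ≤ a * (a * i + b * (j' + 2)) := Nat.mul_le_mul ha hz1m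
        have hAr := hΔ (a * (a * i + b * (j' + 2)) + b * b)
          (Finset.mem_Icc.mpr ⟨by omega, hAbd⟩)
        have hA1 : Δ (a * (a * i + b * (j' + 2)) + b * b) = 1 := by omega
        have hw0 : Δ (a * i + b * (j' + 1)) = 0 := by
          by_contra hw1'
          have hwr := hΔ (a * i + b * (j' + 1)) (Finset.mem_Icc.mpr ⟨hw1, hwn⟩)
          have hid : a * (a * i + b * (j' + 1)) + b * (a + b)
              = a * (a * i + b * (j' + 2)) + b * b := by ring
          have h := key (a * i + b * (j' + 1)) (a + b) hw1 hwn (by omega) hvn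
            (by rw [hid]; exact hAbd) (by omega)
          rw [hid] at h
          omega
        exact IH (i + (j' + 1)) (by omega) i (j' + 1) rfl hi1 hia (by omega) (by omega) hw0
    · -- i ≥ 2 : reduce i
      obtain ⟨i', rfl⟩ : ∃ i', i = i' + 2 := ⟨i - 2, by omega⟩
      have hw1 : 1 ≤ a * (i' + 1) + b * j := hz1 (i' + 1) j (by omega)
      have hwn : a * (i' + 1) + b * j ≤ n :=
        le_trans (hzb (i' + 1) j (by omega) hja) hAv
      have hAbd : a * a + b * (a * (i' + 2) + b * j) ≤ n := hB1 _ hzbm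
      have hA := key a (a * (i' + 2) + b * j) ha han hz1m hzn hAbd (by omega)
      have hA1lb : 1 * 1 ≤ a * a := Nat.mul_le_mul ha ha
      have hAr := hΔ (a * a + b * (a * (i' + 2) + b * j))
        (Finset.mem_Icc.mpr ⟨by omega, hAbd⟩)
      have hA1 : Δ (a * a + b * (a * (i' + 2) + b * j)) = 1 := by omega
      have hw0 : Δ (a * (i' + 1) + b * j) = 0 := by
        by_contra hw1'
        have hwr := hΔ (a * (i' + 1) + b * j) (Finset.mem_Icc.mpr ⟨hw1, hwn⟩)
        have hid : a * (a + b) + b * (a * (i' + 1) + b * j)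
            = a * a + b * (a * (i' + 2) + b * j) := by ring
        have h := key (a + b) (a * (i' + 1) + b * j) (by omega) hvn hw1 hwn
          (by rw [hid]; exact hAbd) (by omega)
        rw [hid] at h
        omega
      exact IH ((i' + 1) + j) (by omega) (i' + 1) j rfl (by omega) (by omega) hj1 hja hw0

theorem claim31 (a b n : ℕ) (ha : 0 < a) (hab : a ≤ b) (hndvd : ¬ a ∣ b)
    (hn : a * (a + b) ^ 2 + b ≤ n)
    (Δ : ℕ → ℕ) (hΔ : ∀ i ∈ Finset.Icc 1 n, Δ i ≤ 1)
    (h1 : Δ 1 = 0) (hΔa : Δ a = 0) (hΔb : Δ b = 0)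
    (hno : ¬ ∃ x ∈ Finset.Icc 1 n, ∃ y ∈ Finset.Icc 1 n, ∃ z ∈ Finset.Icc 1 n,
      a * x + b * y = z ∧ Δ x = Δ y ∧ Δ y = Δ z) :
    ∀ i ∈ Finset.Icc 1 a, ∀ j ∈ Finset.Icc 1 a, Δ (a * i + b * j) = 1 := by
  intro i hi j hj
  rw [Finset.mem_Icc] at hi hj
  have hb1 : 1 ≤ b := le_trans ha hab
  have hzb : a * i + b * j ≤ a * (a + b) := by nlinarith [hi.2, hj.2]
  have hzn : a * i + b * j ≤ n := by nlinarith [sq_nonneg (a + b)]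
  have hz1 : 1 ≤ a * i + b * j := by nlinarith [hi.1, hj.1]
  have hr := hΔ (a * i + b * j) (Finset.mem_Icc.mpr ⟨hz1, hzn⟩)
  have := claim31_aux a b n ha hab hn Δ hΔ h1 hΔa hΔb hno (i + j) i j rfl hi.1 hi.2 hj.1 hj.2
  omega
end

section
/- Let a, b, n be positive integers with a ≤ b, v = a + b, a not dividing b, and n ≥ a·v² + b. Suppose Δ : [1,n] → {0,1} is a 2-coloring with Δ(1) = Δ(a) = Δ(b) = 0 such that a·x + b·y = z has no monochromatic solution in [1,n]. Then Δ(c) = 0 for every c ∈ {1,…,v−1}. -/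
set_option maxHeartbeats 1000000 in
theorem claim32 (a b n : ℕ) (ha : 0 < a) (hab : a ≤ b) (hndvd : ¬ a ∣ b)
    (hn : a * (a + b) ^ 2 + b ≤ n)
    (Δ : ℕ → ℕ) (hΔ : ∀ i ∈ Finset.Icc 1 n, Δ i ≤ 1)
    (h1 : Δ 1 = 0) (hΔa : Δ a = 0) (hΔb : Δ b = 0)
    (hno : ¬ ∃ x ∈ Finset.Icc 1 n, ∃ y ∈ Finset.Icc 1 n, ∃ z ∈ Finset.Icc 1 n,
      a * x + b * y = z ∧ Δ x = Δ y ∧ Δ y = Δ z) :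
    ∀ c ∈ Finset.Icc 1 (a + b - 1), Δ c = 0 := by
  have ha2 : 2 ≤ a := by
    by_contra h
    have : a = 1 := by omega
    exact hndvd (this ▸ one_dvd b)
  have hab' : a < b := lt_of_le_of_ne hab (fun h => hndvd (h ▸ dvd_refl a))
  have hn' : a * ((a + b) * (a + b)) + b ≤ n := by
    have h2 : (a + b) ^ 2 = (a + b) * (a + b) := by ring
    rw [h2] at hn
    linarith
  have mem : ∀ t : ℕ, 1 ≤ t → t ≤ n → t ∈ Finset.Icc 1 n := fun t u v =>
    Finset.mem_Icc.mpr ⟨u, v⟩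
  have H0 : ∀ x y z : ℕ, 1 ≤ x → 1 ≤ y → z ≤ n → a * x + b * y = z →
      Δ x = 0 → Δ y = 0 → Δ z = 1 := by
    intro x y z hx hy hzn hz dx dy
    have hxz : x ≤ z := by calc
      x = 1 * x := (one_mul x).symm
      _ ≤ a * x := Nat.mul_le_mul_right x (by omega)
      _ ≤ a * x + b * y := Nat.le_add_right _ _
      _ = z := hz
    have hyz : y ≤ z := by calc
      y = 1 * y := (one_mul y).symm
      _ ≤ b * y := Nat.mul_le_mul_right y (by omega)
      _ ≤ a * x + b * y := Nat.le_add_left _ _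
      _ = z := hz
    have hz1 : 1 ≤ z := le_trans hx hxz
    have hzle : Δ z ≤ 1 := hΔ z (mem z hz1 hzn)
    by_contra hne
    exact hno ⟨x, mem x hx (hxz.trans hzn), y, mem y hy (hyz.trans hzn),
      z, mem z hz1 hzn, hz, by omega, by omega⟩
  have H1 : ∀ x y z : ℕ, 1 ≤ x → 1 ≤ y → z ≤ n → a * x + b * y = z →
      Δ x = 1 → Δ y = 1 → Δ z = 0 := by
    intro x y z hx hy hzn hz dx dy
    have hxz : x ≤ z := by calc
      x = 1 * x := (one_mul x).symm
      _ ≤ a * x := Nat.mul_le_mul_right x (by omega)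
      _ ≤ a * x + b * y := Nat.le_add_right _ _
      _ = z := hz
    have hyz : y ≤ z := by calc
      y = 1 * y := (one_mul y).symm
      _ ≤ b * y := Nat.mul_le_mul_right y (by omega)
      _ ≤ a * x + b * y := Nat.le_add_left _ _
      _ = z := hz
    have hz1 : 1 ≤ z := le_trans hx hxz
    have hzle : Δ z ≤ 1 := hΔ z (mem z hz1 hzn)
    by_contra hne
    exact hno ⟨x, mem x hx (hxz.trans hzn), y, mem y hy (hyz.trans hzn),
      z, mem z hz1 hzn, hz, by omega, by omega⟩
  have pos_mul : ∀ x y : ℕ, 1 ≤ x → 1 ≤ y → 1 ≤ x * y := fun x y hx hy =>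
    Nat.one_le_iff_ne_zero.mpr (Nat.mul_ne_zero (by omega) (by omega))
  have posR : ∀ x y : ℕ, 1 ≤ y → 1 ≤ x + y := fun x y h =>
    le_trans h (Nat.le_add_left y x)
  have posL : ∀ x y : ℕ, 1 ≤ x → 1 ≤ x + y := fun x y h =>
    le_trans h (Nat.le_add_right x y)
  have hvn : a + b ≤ n := by
    have h2 : (a + b) * 1 ≤ (a + b) * (a + b) := mul_le_mul_right (by omega) _
    have h3 : 1 * ((a + b) * (a + b)) ≤ a * ((a + b) * (a + b)) :=
      mul_le_mul_left (by omega) _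
    linarith
  intro c hc
  revert hc
  induction c using Nat.strong_induction_on with
  | _ c ih =>
    intro hc
    rw [Finset.mem_Icc] at hc
    obtain ⟨hcl, hcu⟩ := hc
    have hcn : c ≤ n := by omega
    by_contra hc0
    have hΔc : Δ c = 1 := by have := hΔ c (mem c hcl hcn); omega
    have hca : c ≠ a := fun h => by rw [h, hΔa] at hΔc; omega
    have hcb : c ≠ b := fun h => by rw [h, hΔb] at hΔc; omega
    have hc1 : c ≠ 1 := fun h => by rw [h, h1] at hΔc; omega
    have hc2 : 2 ≤ c := by omega
    have IH0 : ∀ d, 1 ≤ d → d < c → Δ d = 0 := fun d u v =>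
      ih d v (Finset.mem_Icc.mpr ⟨u, by omega⟩)
    have hcab : c + 1 ≤ a + b := by omega
    -- common facts
    have hΔv : Δ (a + b) = 1 := H0 1 1 (a + b) le_rfl le_rfl hvn (by ring) h1 h1
    have hsn : a * (c - 1) + b * 1 ≤ n := by
      have h2 : a * (c - 1) ≤ a * (a + b) := mul_le_mul_right (by omega) a
      have h3 : a * (a + b) * 1 ≤ a * (a + b) * (a + b) :=
        mul_le_mul_right (by omega) (a * (a + b))
      have h4 : a * (a + b) * (a + b) = a * ((a + b) * (a + b)) := by ring
      linarith
    have hΔs : Δ (a * (c - 1) + b * 1) = 1 :=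
      H0 (c - 1) 1 _ (by omega) le_rfl hsn rfl (IH0 (c - 1) (by omega) (by omega)) h1
    -- get q, r
    obtain ⟨q, r, hbqr, hr1, hra⟩ : ∃ q r, a * q + r = b ∧ 1 ≤ r ∧ r < a := by
      refine ⟨b / a, b % a, Nat.div_add_mod b a, ?_, Nat.mod_lt b (by omega)⟩
      rcases Nat.eq_zero_or_pos (b % a) with h | h
      · exact absurd (Nat.dvd_of_mod_eq_zero h) hndvd
      · omega
    by_cases hsmall : c < a ∨ c ≤ q
    · -- small c : case analysis on Δ (a*c+b)
      have hac : a * c ≤ a * a + b := by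
        rcases hsmall with h | h
        · have := mul_le_mul_right (show c ≤ a from by omega) a
          omega
        · have h2 : a * c ≤ a * q := mul_le_mul_right h a
          omega
      have hacbn : a * c + b ≤ n := by
        have h2 : a * c ≤ a * (a + b) := mul_le_mul_right (by omega) a
        have h3 : a * (a + b) * 1 ≤ a * (a + b) * (a + b) :=
          mul_le_mul_right (by omega) (a * (a + b))
        have h4 : a * (a + b) * (a + b) = a * ((a + b) * (a + b)) := by ring
        linarith
      have hacb01 : Δ (a * c + b) ≤ 1 := hΔ _ (mem _ (posR _ b (by omega)) hacbn)
      have hcvn : c * (a + b) ≤ n := by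
        have h2 : c * (a + b) ≤ (a + b) * (a + b) := mul_le_mul_left (by omega) (a + b)
        have h3 : 1 * ((a + b) * (a + b)) ≤ a * ((a + b) * (a + b)) :=
          mul_le_mul_left (by omega) _
        linarith
      have hΔcv : Δ (c * (a + b)) = 0 :=
        H1 c c _ (by omega) (by omega) hcvn (by ring) hΔc hΔc
      have hz1n : a * (c * (a + b)) + b * b ≤ n := by
        have h2 : (a * c) * (a + b) ≤ (a * a + b) * (a + b) := mul_le_mul_left hac (a + b)
        have h3 : 1 * (a * b) ≤ a * (a * b) := mul_le_mul_left (by omega) (a * b)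
        have h4 : 2 * (b * b) ≤ a * (b * b) := mul_le_mul_left ha2 (b * b)
        linarith
      have hz2n : a * (a + b) + b * (a * (c - 1) + b * 1) ≤ n := by
        have h0 : a * (c - 1) ≤ a * c := mul_le_mul_right (Nat.sub_le c 1) a
        have h2 : b * (a * (c - 1)) ≤ b * (a * c) := mul_le_mul_right h0 b
        have h3 : b * (a * c) ≤ b * (a * a + b) := mul_le_mul_right hac b
        have h4 : 2 * (b * b) ≤ a * (b * b) := mul_le_mul_left ha2 (b * b)
        have h5 : 1 * (a * b) ≤ a * (a * b) := mul_le_mul_left (by omega) (a * b)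
        have h6 : 1 * (a * a) ≤ a * (a * a) := mul_le_mul_left (by omega) (a * a)
        linarith
      have eid1 : a * (a * c + b) + b * (a * (c - 1) + b * 1) = a * (c * (a + b)) + b * b := by
        obtain ⟨C, rfl⟩ : ∃ C, c = C + 1 := ⟨c - 1, by omega⟩
        simp only [Nat.add_sub_cancel]
        ring
      have eid2 : a * (a + b) + b * (a * (c - 1) + b * 1) = a * a + b * (a * c + b) := by
        obtain ⟨C, rfl⟩ : ∃ C, c = C + 1 := ⟨c - 1, by omega⟩
        simp only [Nat.add_sub_cancel]
        ring
      have hz2n' : a * a + b * (a * c + b) ≤ n := by rw [← eid2]; exact hz2n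
      rcases (by omega : Δ (a * c + b) = 0 ∨ Δ (a * c + b) = 1) with h | h
      · -- Δ(ac+b)=0
        have e1 : Δ (a * a + b * (a * c + b)) = 1 :=
          H0 a (a * c + b) _ (by omega) (posR _ b (by omega)) hz2n' rfl hΔa h
        have e2 : Δ (a * a + b * (a * c + b)) = 0 :=
          H1 (a + b) (a * (c - 1) + b * 1) _ (by omega) (posR _ (b * 1) (by omega))
            hz2n' eid2 hΔv hΔs
        omega
      · -- Δ(ac+b)=1
        have e1 : Δ (a * (c * (a + b)) + b * b) = 1 :=
          H0 (c * (a + b)) b _ (pos_mul c (a + b) (by omega) (by omega)) (by omega)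
            hz1n rfl hΔcv hΔb
        have e2 : Δ (a * (c * (a + b)) + b * b) = 0 :=
          H1 (a * c + b) (a * (c - 1) + b * 1) _ (posR _ b (by omega))
            (posR _ (b * 1) (by omega)) hz1n eid1 h hΔs
        omega
    · -- large c : a < c and q < c
      push_neg at hsmall
      have hacl : a < c := by omega
      have hqc : q < c := by omega
      have hXn : a * (a + b) + b * c ≤ n := by
        have h2 : b * c ≤ b * (a + b) := mul_le_mul_right (by omega) b
        have h3 : 1 * ((a + b) * (a + b)) ≤ a * ((a + b) * (a + b)) :=
          mul_le_mul_left (by omega) _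
        linarith
      have hX : Δ (a * (a + b) + b * c) = 0 :=
        H1 (a + b) c _ (by omega) (by omega) hXn rfl hΔv hΔc
      have hΔr : Δ r = 0 := IH0 r hr1 (by omega)
      have hZn : a * (a * (a + b) + b * c) + b * r ≤ n := by
        have h2 : (a * b) * (c + 1) ≤ (a * b) * (a + b) := mul_le_mul_right hcab (a * b)
        have h3 : b * (r + 1) ≤ b * a := mul_le_mul_right (by omega) b
        linarith
      have hZ1 : Δ (a * (a * (a + b) + b * c) + b * r) = 1 :=
        H0 (a * (a + b) + b * c) r _ (posR _ (b * c) (pos_mul b c (by omega) (by omega)))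
          hr1 hZn rfl hX hΔr
      by_cases hq2 : 2 ≤ q
      · -- q ≥ 2
        have hΔa1 : Δ (a - 1) = 0 := IH0 (a - 1) (by omega) (by omega)
        have hA1n : a * a + b * (a - 1) ≤ n := by
          have h2 : b * (a - 1) ≤ b * a := mul_le_mul_right (Nat.sub_le a 1) b
          have h3 : (a + b) * a ≤ (a + b) * (a + b) := mul_le_mul_right (by omega) _
          have h4 : 1 * ((a + b) * (a + b)) ≤ a * ((a + b) * (a + b)) :=
            mul_le_mul_left (by omega) _
          linarith
        have hA1 : Δ (a * a + b * (a - 1)) = 1 :=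
          H0 a (a - 1) _ (by omega) (by omega) hA1n rfl hΔa hΔa1
        have hA2n : a * (c - q + 1) + b * 1 ≤ n := by
          have h2 : a * (c - q + 1) ≤ a * (a + b) := mul_le_mul_right (by omega) a
          have h3 : a * (a + b) * 1 ≤ a * (a + b) * (a + b) :=
            mul_le_mul_right (by omega) (a * (a + b))
          have h4 : a * (a + b) * (a + b) = a * ((a + b) * (a + b)) := by ring
          linarith
        have hA2 : Δ (a * (c - q + 1) + b * 1) = 1 :=
          H0 (c - q + 1) 1 _ (by omega) le_rfl hA2n rfl
            (IH0 (c - q + 1) (by omega) (by omega)) h1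
        have eid : a * (a * a + b * (a - 1)) + b * (a * (c - q + 1) + b * 1) =
            a * (a * (a + b) + b * c) + b * r := by
          obtain ⟨m, rfl⟩ : ∃ m, c = q + m := ⟨c - q, by omega⟩
          obtain ⟨A, rfl⟩ : ∃ A, a = A + 1 := ⟨a - 1, by omega⟩
          subst hbqr
          simp only [Nat.add_sub_cancel, Nat.add_sub_cancel_left]
          ring
        have hZ0 : Δ (a * (a * (a + b) + b * c) + b * r) = 0 :=
          H1 (a * a + b * (a - 1)) (a * (c - q + 1) + b * 1) _
            (posL _ _ (pos_mul a a (by omega) (by omega))) (posR _ (b * 1) (by omega))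
            hZn eid hA1 hA2
        omega
      · -- q = 1
        have hq1 : q = 1 := by
          have hq0 : q ≠ 0 := by
            intro h
            rw [h, Nat.mul_zero] at hbqr
            omega
          omega
        have havn : a * a + b * a ≤ n := by
          have h2 : (a + b) * a ≤ (a + b) * (a + b) := mul_le_mul_right (by omega) _
          have h3 : 1 * ((a + b) * (a + b)) ≤ a * ((a + b) * (a + b)) :=
            mul_le_mul_left (by omega) _
          linarith
        have hav : Δ (a * a + b * a) = 1 :=
          H0 a a _ (by omega) (by omega) havn rfl hΔa hΔa
        have eid : a * (a * a + b * a) + b * (a * (c - 1) + b * 1) =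
            a * (a * (a + b) + b * c) + b * r := by
          obtain ⟨C, rfl⟩ : ∃ C, c = C + 1 := ⟨c - 1, by omega⟩
          have hb' : b = a + r := by rw [hq1] at hbqr; omega
          subst hb'
          simp only [Nat.add_sub_cancel]
          ring
        have hZ0 : Δ (a * (a * (a + b) + b * c) + b * r) = 0 :=
          H1 (a * a + b * a) (a * (c - 1) + b * 1) _
            (posL _ _ (pos_mul a a (by omega) (by omega))) (posR _ (b * 1) (by omega))
            hZn eid hav hΔs
        omega
end

section
/- Let a, b, n be positive integers with a ≤ b, v = a + b, a not dividing b, and n ≥ a·v² + b. Suppose Δ : [1,n] → {0,1} is a 2-coloring with Δ(1) = Δ(a) = Δ(b) = 0 such that a·x + b·y = z has no monochromatic solution in [1,n]. Then Δ(a·i + b·j) = 1 for all i, j ∈ {1,…,v−1}. -/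
set_option maxHeartbeats 1600000


theorem claim33 (a b n : ℕ) (ha : 0 < a) (hab : a ≤ b) (hndvd : ¬ a ∣ b)
    (hn : a * (a + b) ^ 2 + b ≤ n)
    (Δ : ℕ → ℕ) (hΔ : ∀ i ∈ Finset.Icc 1 n, Δ i ≤ 1)
    (h1 : Δ 1 = 0) (hΔa : Δ a = 0) (hΔb : Δ b = 0)
    (hno : ¬ ∃ x ∈ Finset.Icc 1 n, ∃ y ∈ Finset.Icc 1 n, ∃ z ∈ Finset.Icc 1 n,
      a * x + b * y = z ∧ Δ x = Δ y ∧ Δ y = Δ z) :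
    ∀ i ∈ Finset.Icc 1 (a + b - 1), ∀ j ∈ Finset.Icc 1 (a + b - 1),
      Δ (a * i + b * j) = 1 := by
  -- a ≥ 2 and a < b
  have ha2 : 2 ≤ a := by
    rcases Nat.lt_or_ge a 2 with h | h
    · exfalso
      have : a = 1 := by omega
      exact hndvd (this ▸ one_dvd b)
    · exact h
  have hb : a < b := lt_of_le_of_ne hab (fun h => hndvd (h ▸ dvd_rfl))
  -- positivity helper
  have hpos : ∀ x y : ℕ, 1 ≤ x → 1 ≤ a * x + b * y := by
    intro x y hx
    have h1' : x ≤ a * x := Nat.le_mul_of_pos_left x ha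
    omega
  -- range helper : if x,y ≤ a+b then a*x+b*y ≤ n
  have hWn : ∀ x y : ℕ, x ≤ a + b → y ≤ a + b → a * x + b * y ≤ n := by
    intro x y hx hy
    have h1' : a * x + b * y ≤ a * (a + b) + b * (a + b) :=
      add_le_add (mul_le_mul_right hx a) (mul_le_mul_right hy b)
    have h2' : a * (a + b) + b * (a + b) = (a + b) * (a + b) := by ring
    have h3' : (a + b) * (a + b) ≤ a * ((a + b) * (a + b)) :=
      Nat.le_mul_of_pos_left _ ha
    have h4' : a * ((a + b) * (a + b)) = a * (a + b) ^ 2 := by ring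
    omega
  have hvn : a + b ≤ n := by
    have := hWn 1 1 (by omega) (by omega)
    omega
  have h1n : 1 ≤ n := by omega
  have han : a ≤ n := by omega
  have hbn : b ≤ n := by omega
  -- no-mono helpers
  have hnot : ∀ x y : ℕ, 1 ≤ x → x ≤ n → 1 ≤ y → y ≤ n → a * x + b * y ≤ n →
      ¬ (Δ x = Δ y ∧ Δ y = Δ (a * x + b * y)) := by
    intro x y hx1 hxn hy1 hyn hzn h
    exact hno ⟨x, Finset.mem_Icc.mpr ⟨hx1, hxn⟩, y, Finset.mem_Icc.mpr ⟨hy1, hyn⟩,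
      a * x + b * y, Finset.mem_Icc.mpr ⟨hpos x y hx1, hzn⟩, rfl, h⟩
  have hone : ∀ x y : ℕ, 1 ≤ x → x ≤ n → 1 ≤ y → y ≤ n → a * x + b * y ≤ n →
      Δ x = 0 → Δ y = 0 → Δ (a * x + b * y) = 1 := by
    intro x y hx1 hxn hy1 hyn hzn h0x h0y
    have hz := hΔ (a * x + b * y) (Finset.mem_Icc.mpr ⟨hpos x y hx1, hzn⟩)
    have hh := hnot x y hx1 hxn hy1 hyn hzn
    by_contra hne
    exact hh ⟨by omega, by omega⟩
  have hzero : ∀ x y : ℕ, 1 ≤ x → x ≤ n → 1 ≤ y → y ≤ n → a * x + b * y ≤ n →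
      Δ x = 1 → Δ y = 1 → Δ (a * x + b * y) = 0 := by
    intro x y hx1 hxn hy1 hyn hzn h1x h1y
    have hz := hΔ (a * x + b * y) (Finset.mem_Icc.mpr ⟨hpos x y hx1, hzn⟩)
    have hh := hnot x y hx1 hxn hy1 hyn hzn
    by_contra hne
    exact hh ⟨by omega, by omega⟩
  have hfalse : ∀ x y : ℕ, 1 ≤ x → x ≤ n → 1 ≤ y → y ≤ n → a * x + b * y ≤ n →
      Δ x = 1 → Δ y = 1 → Δ (a * x + b * y) = 1 → False := by
    intro x y hx1 hxn hy1 hyn hzn h1x h1y h1z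
    exact hnot x y hx1 hxn hy1 hyn hzn ⟨by omega, by omega⟩
  -- Δ (a+b) = 1
  have hv1 : Δ (a + b) = 1 := by
    have := hone 1 1 le_rfl h1n le_rfl h1n (hWn 1 1 (by omega) (by omega)) h1 h1
    rwa [mul_one, mul_one] at this
  -- Δ (a*a + b*b) = 1
  have hsqn : a * a + b * b ≤ n := hWn a b (by omega) (by omega)
  have hsq : Δ (a * a + b * b) = 1 :=
    hone a b (by omega) han (by omega) hbn hsqn hΔa hΔb
  -- k = b - a ; Δ k = 0
  obtain ⟨k, hk1, hbk⟩ : ∃ k, 1 ≤ k ∧ b = a + k := ⟨b - a, by omega, by omega⟩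
  have hkn : k ≤ n := by omega
  have hk0 : Δ k = 0 := by
    have hΔk := hΔ k (Finset.mem_Icc.mpr ⟨hk1, hkn⟩)
    by_contra hkne
    have hk_one : Δ k = 1 := by omega
    have e2 : a * (a + b) + b * k = a * a + b * b := by rw [hbk]; ring
    exact hfalse (a + b) k (by omega) hvn hk1 hkn (by rw [e2]; exact hsqn)
      hv1 hk_one (by rw [e2]; exact hsq)
  -- core lemma: every c with 1 ≤ c < a + b is colored 0
  have core : ∀ c : ℕ, 1 ≤ c → c < a + b → Δ c = 0 := by
    have H : ∀ N : ℕ, ∀ c : ℕ, c ≤ N → 1 ≤ c → c < a + b → Δ c = 0 := by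
      intro N
      induction N with
      | zero => intro c hc h1c _; omega
      | succ N ihN =>
        intro c hcN hc1 hcv
        by_cases hc_1 : c = 1
        · rw [hc_1]; exact h1
        by_cases hc_a : c = a
        · rw [hc_a]; exact hΔa
        by_cases hc_b : c = b
        · rw [hc_b]; exact hΔb
        have hc2 : 2 ≤ c := by omega
        have hcn : c ≤ n := by omega
        have hΔc := hΔ c (Finset.mem_Icc.mpr ⟨hc1, hcn⟩)
        by_contra hcne
        have hc_one : Δ c = 1 := by omega
        -- IH restated
        have IH : ∀ m : ℕ, m < c → 1 ≤ m → m < a + b → Δ m = 0 := by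
          intro m hm h1m hmv
          exact ihN m (by omega) h1m hmv
        -- K := a*(a+b) + b*c is colored 0
        have hKn : a * (a + b) + b * c ≤ n := hWn (a + b) c (le_rfl) (by omega)
        have hK0 : Δ (a * (a + b) + b * c) = 0 :=
          hzero (a + b) c (by omega) hvn hc1 hcn hKn hv1 hc_one
        have hK1 : 1 ≤ a * (a + b) + b * c := hpos (a + b) c (by omega)
        by_cases hχ : a * c + b ≤ a * (a + b) + a + 1
        · -- scheme T*
          obtain ⟨c₁, hc₁⟩ : ∃ c₁, c = c₁ + 1 := ⟨c - 1, by omega⟩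
          have hc₁1 : 1 ≤ c₁ := by omega
          have hΔc₁ : Δ c₁ = 0 := IH c₁ (by omega) hc₁1 (by omega)
          -- U := a*a + b*a
          have hUn : a * a + b * a ≤ n := hWn a a (by omega) (by omega)
          have hU1 : Δ (a * a + b * a) = 1 :=
            hone a a (by omega) han (by omega) han hUn hΔa hΔa
          -- V := a*c₁ + b*1
          have hVn : a * c₁ + b * 1 ≤ n := hWn c₁ 1 (by omega) (by omega)
          have hV1 : Δ (a * c₁ + b * 1) = 1 :=
            hone c₁ 1 hc₁1 (by omega) le_rfl h1n hVn hΔc₁ h1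
          -- z* := a*K + b*k  is colored 1, and range
          have h4 : b * (a * c + b) ≤ b * (a * (a + b) + a + 1) := mul_le_mul_right hχ b
          have h5 : b * b = a * b + b * k := by rw [hbk]; ring
          have hzr : a * (a * (a + b) + b * c) + b * k ≤ n := by
            have E0 : a * (a * (a + b) + b * c) = a * (a * (a + b)) + a * (b * c) := by ring
            have E1 : a * (b * c) = b * (a * c) := by ring
            have E2 : a * (a + b) ^ 2 = a * (a * (a + b)) + b * (a * (a + b)) := by ring
            have E3 : b * (a * c + b) = b * (a * c) + b * b := by ring
            have E4 : b * (a * (a + b) + a + 1) = b * (a * (a + b)) + b * a + b := by ring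
            have E5 : b * a = a * b := by ring
            omega
          have hz1 : Δ (a * (a * (a + b) + b * c) + b * k) = 1 :=
            hone (a * (a + b) + b * c) k hK1 hKn hk1 hkn hzr hK0 hk0
          -- identity and contradiction
          have eid : a * (a * a + b * a) + b * (a * c₁ + b * 1)
              = a * (a * (a + b) + b * c) + b * k := by
            rw [hc₁, hbk]; ring
          exact hfalse (a * a + b * a) (a * c₁ + b * 1)
            (hpos a a (by omega)) hUn (hpos c₁ 1 hc₁1) hVn
            (by rw [eid]; exact hzr) hU1 hV1 (by rw [eid]; exact hz1)
        · -- scheme R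
          push_neg at hχ
          have hχ' : a * (a + b) + a + 2 ≤ a * c + b := hχ
          have hbr : a * (b / a) + b % a = b := Nat.div_add_mod b a
          set β := b / a with hβdef
          set r₀ := b % a with hr₀def
          have hr₀a : r₀ < a := Nat.mod_lt _ (by omega)
          have hr₀1 : 1 ≤ r₀ := by
            rcases Nat.eq_zero_or_pos r₀ with h0 | h0
            · exact absurd (Nat.dvd_of_mod_eq_zero h0) hndvd
            · exact h0
          have hβ1 : 1 ≤ β := by
            rcases Nat.eq_zero_or_pos β with h0 | h0
            · exfalso
              rw [h0] at hbr
              simp at hbr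
              omega
            · exact h0
          -- a < c
          have hca : a < c := by
            have hE : a * (a + b) = a * a + a * b := by ring
            have hbab : b ≤ a * b := Nat.le_mul_of_pos_left b ha
            have h1' : a * a + a + 2 ≤ a * c := by omega
            by_contra hcon
            push_neg at hcon
            have : a * c ≤ a * a := mul_le_mul_right hcon a
            omega
          -- β + 2 ≤ a + c
          have hS2 : β + 2 ≤ a + c := by
            by_contra hcon
            push_neg at hcon
            have hac : a + c ≤ β + 1 := by omega
            have hm : a * (a + c) ≤ a * (β + 1) := mul_le_mul_right hac a
            have hm1 : a * (a + c) = a * a + a * c := by ring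
            have hm2 : a * (β + 1) = a * β + a := by ring
            have h2b : 2 * b ≤ a * b := mul_le_mul_left ha2 b
            have hE : a * (a + b) = a * a + a * b := by ring
            omega
          obtain ⟨S, hSdef⟩ : ∃ S, a + c = β + S := ⟨a + c - β, by omega⟩
          have hS2' : 2 ≤ S := by omega
          have hSc : S ≤ 2 * c - 2 := by omega
          obtain ⟨q, p, hq1, hqc, hp1, hpc, hqp⟩ :
              ∃ q p, 1 ≤ q ∧ q ≤ c - 1 ∧ 1 ≤ p ∧ p ≤ c - 1 ∧ q + p = S := by
            refine ⟨min (c - 1) (S - 1), S - min (c - 1) (S - 1), ?_, ?_, ?_, ?_, ?_⟩ <;> omega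
          have hq0 : Δ q = 0 := IH q (by omega) hq1 (by omega)
          have hp0 : Δ p = 0 := IH p (by omega) hp1 (by omega)
          have hr₀0 : Δ r₀ = 0 := IH r₀ (by omega) hr₀1 (by omega)
          -- U := a*a + b*q, V := a*p + b*1
          have hUn : a * a + b * q ≤ n := hWn a q (by omega) (by omega)
          have hU1 : Δ (a * a + b * q) = 1 :=
            hone a q (by omega) han hq1 (by omega) hUn hΔa hq0
          have hVn : a * p + b * 1 ≤ n := hWn p 1 (by omega) (by omega)
          have hV1 : Δ (a * p + b * 1) = 1 :=
            hone p 1 hp1 (by omega) le_rfl h1n hVn hp0 h1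
          -- z* := a*K + b*r₀ : range and color 1
          have hm : a * (c + 1) ≤ a * (a + b) := mul_le_mul_right (by omega) a
          have hm' : a * (c + 1) = a * c + a := by ring
          have h3 : a * c + r₀ ≤ a * (a + b) := by omega
          have h4 : b * (a * c + r₀) ≤ b * (a * (a + b)) := mul_le_mul_right h3 b
          have hzr : a * (a * (a + b) + b * c) + b * r₀ ≤ n := by
            have E0 : a * (a * (a + b) + b * c) = a * (a * (a + b)) + a * (b * c) := by ring
            have E1 : a * (b * c) = b * (a * c) := by ring
            have E2 : a * (a + b) ^ 2 = a * (a * (a + b)) + b * (a * (a + b)) := by ring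
            have E3 : b * (a * c + r₀) = b * (a * c) + b * r₀ := by ring
            omega
          have hz1 : Δ (a * (a * (a + b) + b * c) + b * r₀) = 1 :=
            hone (a * (a + b) + b * c) r₀ hK1 hKn hr₀1 (by omega) hzr hK0 hr₀0
          -- identity and contradiction
          have eid2 : a * (a * a + b * q) + b * (a * p + b * 1)
              = a * (a * (a + b) + b * c) + b * r₀ := by
            zify
            have e1 : (q : ℤ) + p = S := by exact_mod_cast hqp
            have e2 : (a : ℤ) + c = β + S := by exact_mod_cast hSdef
            have e3 : (a : ℤ) * β + r₀ = b := by exact_mod_cast hbr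
            linear_combination (a * b : ℤ) * e1 - (a * b : ℤ) * e2 - (b : ℤ) * e3
          exact hfalse (a * a + b * q) (a * p + b * 1)
            (hpos a q (by omega)) hUn (hpos p 1 hp1) hVn
            (by rw [eid2]; exact hzr) hU1 hV1 (by rw [eid2]; exact hz1)
    exact fun c hc1 hcv => H c c le_rfl hc1 hcv
  -- conclude the claim
  intro i hi j hj
  rw [Finset.mem_Icc] at hi hj
  have hi0 : Δ i = 0 := core i hi.1 (by omega)
  have hj0 : Δ j = 0 := core j hj.1 (by omega)
  have hzn : a * i + b * j ≤ n := hWn i j (by omega) (by omega)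
  exact hone i j hi.1 (by omega) hj.1 (by omega) hzn hi0 hj0
end

section
/- Let a, b, n be positive integers with a ≤ b, v = a + b, a not dividing b·(b−1), and n ≥ a·v² + b. Suppose Δ : [1,n] → {0,1} is a 2-coloring with Δ(1) = 0 and Δ(a) = Δ(b) = 1 such that a·x + b·y = z has no monochromatic solution in [1,n]. Then Δ(a·v) = Δ(b·v) = 0. -/
theorem eq41 (a b n : ℕ) (ha : 0 < a) (hab : a ≤ b) (hndvd : ¬ a ∣ b * (b - 1))
    (hn : a * (a + b) ^ 2 + b ≤ n)
    (Δ : ℕ → ℕ) (hΔ : ∀ i ∈ Finset.Icc 1 n, Δ i ≤ 1)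
    (h1 : Δ 1 = 0) (hΔa : Δ a = 1) (hΔb : Δ b = 1)
    (hno : ¬ ∃ x ∈ Finset.Icc 1 n, ∃ y ∈ Finset.Icc 1 n, ∃ z ∈ Finset.Icc 1 n,
      a * x + b * y = z ∧ Δ x = Δ y ∧ Δ y = Δ z) :
    Δ (a * (a + b)) = 0 ∧ Δ (b * (a + b)) = 0 := by
  have hb : 0 < b := ha.trans_le hab
  have han : a ∈ Finset.Icc 1 n := by
    simp only [Finset.mem_Icc]; exact ⟨ha, by nlinarith⟩
  have hbn : b ∈ Finset.Icc 1 n := by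
    simp only [Finset.mem_Icc]; exact ⟨hb, by nlinarith⟩
  have havn : a * (a + b) ∈ Finset.Icc 1 n := by
    simp only [Finset.mem_Icc]
    exact ⟨Nat.mul_pos ha (by omega), by nlinarith⟩
  have hbvn : b * (a + b) ∈ Finset.Icc 1 n := by
    simp only [Finset.mem_Icc]
    exact ⟨Nat.mul_pos hb (by omega), by nlinarith⟩
  have hA : Δ (a * (a + b)) = 0 := by
    by_contra h
    have hle := hΔ _ havn
    have h1' : Δ (a * (a + b)) = 1 := by omega
    exact hno ⟨a, han, a, han, a * (a + b), havn, by ring, rfl, by rw [hΔa, h1']⟩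
  have hB : Δ (b * (a + b)) = 0 := by
    by_contra h
    have hle := hΔ _ hbvn
    have h1' : Δ (b * (a + b)) = 1 := by omega
    exact hno ⟨b, hbn, b, hbn, b * (a + b), hbvn, by ring, rfl, by rw [hΔb, h1']⟩
  exact ⟨hA, hB⟩
end

section
/- Let a, b, n be positive integers with a ≤ b, v = a + b, a not dividing b·(b−1), and n ≥ a·v² + b. Suppose Δ : [1,n] → {0,1} is a 2-coloring with Δ(1) = 0 and Δ(a) = Δ(b) = 1 such that a·x + b·y = z has no monochromatic solution in [1,n]. Then Δ(1 + a) = 0 and Δ(a·v + v) = 1. -/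
theorem eq42 (a b n : ℕ) (ha : 0 < a) (hab : a ≤ b) (hndvd : ¬ a ∣ b * (b - 1))
    (hn : a * (a + b) ^ 2 + b ≤ n)
    (Δ : ℕ → ℕ) (hΔ : ∀ i ∈ Finset.Icc 1 n, Δ i ≤ 1)
    (h1 : Δ 1 = 0) (hΔa : Δ a = 1) (hΔb : Δ b = 1)
    (hno : ¬ ∃ x ∈ Finset.Icc 1 n, ∃ y ∈ Finset.Icc 1 n, ∃ z ∈ Finset.Icc 1 n,
      a * x + b * y = z ∧ Δ x = Δ y ∧ Δ y = Δ z) :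
    Δ (1 + a) = 0 ∧ Δ (a * (a + b) + (a + b)) = 1 := by
  have hb : 0 < b := lt_of_lt_of_le ha hab
  have hnbig : a * (a + b) * (a + b) + b ≤ n := by
    have : a * (a + b) ^ 2 = a * (a + b) * (a + b) := by ring
    omega
  -- basic no-mono principle
  have key : ∀ x y : ℕ, 1 ≤ x → x ≤ n → 1 ≤ y → y ≤ n → a * x + b * y ≤ n →
      ¬ (Δ x = Δ y ∧ Δ y = Δ (a * x + b * y)) := by
    intro x y hx1 hx2 hy1 hy2 hz2 ⟨e1, e2⟩
    have hax : 0 < a * x := Nat.mul_pos ha hx1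
    exact hno ⟨x, Finset.mem_Icc.mpr ⟨hx1, hx2⟩, y, Finset.mem_Icc.mpr ⟨hy1, hy2⟩,
      a * x + b * y, Finset.mem_Icc.mpr ⟨by omega, hz2⟩, rfl, e1, e2⟩
  have hval : ∀ m : ℕ, 1 ≤ m → m ≤ n → Δ m ≤ 1 := by
    intro m h1m h2m
    exact hΔ m (Finset.mem_Icc.mpr ⟨h1m, h2m⟩)
  have h1an : 1 + a ≤ n := by nlinarith
  -- range bound for a*b*(k+1) + b with k+1 ≤ a+b
  have hrange : ∀ k : ℕ, k + 1 ≤ a + b → a * b * (k + 1) + b ≤ n := by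
    intro k hk
    have h1' : a * b * (k + 1) ≤ a * b * (a + b) := Nat.mul_le_mul_left _ hk
    have h2' : a * b * (a + b) ≤ a * (a + b) * (a + b) :=
      Nat.mul_le_mul_right _ (Nat.mul_le_mul_left _ (Nat.le_add_left b a))
    omega
  -- First: Δ (1+a) = 0
  have hA : Δ (1 + a) = 0 := by
    by_contra hA0
    have h1a : Δ (1 + a) = 1 := by
      have := hval (1 + a) (by omega) h1an
      omega
    -- induction: Δ (k*b) = 1 for 1 ≤ k ≤ a+b
    have hmul : ∀ k : ℕ, 1 ≤ k → k ≤ a + b → Δ (k * b) = 1 := by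
      intro k
      induction k with
      | zero => omega
      | succ k ih =>
        intro _ hk2
        rcases Nat.eq_zero_or_pos k with hk0 | hk1
        · subst hk0; simpa using hΔb
        · have hkb : Δ (k * b) = 1 := ih hk1 (by omega)
          have hkb1 : 1 ≤ k * b := Nat.mul_pos hk1 hb
          have hzeq : a * (k * b) + b * (1 + a) = a * b * (k + 1) + b := by ring
          have hzn : a * (k * b) + b * (1 + a) ≤ n := by
            rw [hzeq]; exact hrange k hk2
          have hkbn : k * b ≤ n := by
            have : k * b ≤ a * (k * b) + b * (1 + a) := by nlinarith
            omega
          -- Δ (a*(k*b) + b*(1+a)) = 0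
          have hz0 : Δ (a * (k * b) + b * (1 + a)) = 0 := by
            have hne := key (k * b) (1 + a) hkb1 hkbn (by omega) h1an hzn
            have := hval (a * (k * b) + b * (1 + a)) (by omega) hzn
            rw [hkb, h1a] at hne
            omega
          have heq : a * (k * b) + b * (1 + a) = a * ((k + 1) * b) + b * 1 := by ring
          rw [heq] at hz0 hzn
          have hkb1' : 1 ≤ (k + 1) * b := Nat.mul_pos (Nat.succ_pos k) hb
          have hkbn' : (k + 1) * b ≤ n := by
            have : (k + 1) * b ≤ a * ((k + 1) * b) + b * 1 := by nlinarith
            omega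
          have hne := key ((k + 1) * b) 1 hkb1' hkbn' le_rfl (by omega) hzn
          have := hval ((k + 1) * b) hkb1' hkbn'
          rw [h1, hz0] at hne
          omega
    -- contradiction with triple (b, b, (a+b)*b)
    have hfin : Δ ((a + b) * b) = 1 := hmul (a + b) (by omega) le_rfl
    have hbn : b ≤ n := by nlinarith
    have habn : a * b + b * b ≤ n := by nlinarith
    have hne := key b b hb hbn hb hbn habn
    have heq : a * b + b * b = (a + b) * b := by ring
    rw [heq, hΔb, hfin] at hne
    exact hne ⟨rfl, rfl⟩
  refine ⟨hA, ?_⟩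
  -- triple (1+a, 1+a, (1+a)*(a+b))
  have hzn : a * (1 + a) + b * (1 + a) ≤ n := by nlinarith
  have hne := key (1 + a) (1 + a) (by omega) h1an (by omega) h1an hzn
  have heq : a * (1 + a) + b * (1 + a) = a * (a + b) + (a + b) := by ring
  rw [heq] at hne hzn
  have := hval (a * (a + b) + (a + b)) (by omega) hzn
  rw [hA] at hne
  omega
end

section
/- Let a, b, n be positive integers with a ≤ b, v = a + b, a not dividing b·(b−1), and n ≥ a·v² + b. Suppose Δ : [1,n] → {0,1} is a 2-coloring with Δ(1) = 0 and Δ(a) = Δ(b) = 1 such that a·x + b·y = z has no monochromatic solution in [1,n]. If Δ(a² + a) = 1, then Δ(j·a) = 1 for every j ∈ {1,…,a}. -/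
theorem claim41 (a b n : ℕ) (ha : 0 < a) (hab : a ≤ b) (hndvd : ¬ a ∣ b * (b - 1))
    (hn : a * (a + b) ^ 2 + b ≤ n)
    (Δ : ℕ → ℕ) (hΔ : ∀ i ∈ Finset.Icc 1 n, Δ i ≤ 1)
    (h1 : Δ 1 = 0) (hΔa : Δ a = 1) (hΔb : Δ b = 1)
    (hno : ¬ ∃ x ∈ Finset.Icc 1 n, ∃ y ∈ Finset.Icc 1 n, ∃ z ∈ Finset.Icc 1 n,
      a * x + b * y = z ∧ Δ x = Δ y ∧ Δ y = Δ z)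
    (hsq : Δ (a ^ 2 + a) = 1) :
    ∀ j ∈ Finset.Icc 1 a, Δ (j * a) = 1 := by
  have hb : 0 < b := lt_of_lt_of_le ha hab
  have hc : ∀ t : ℕ, 1 ≤ t → t ≤ n → Δ t = 0 ∨ Δ t = 1 := by
    intro t h1t h2t
    have := hΔ t (Finset.mem_Icc.mpr ⟨h1t, h2t⟩)
    omega
  have key : ∀ x y : ℕ, 1 ≤ x → 1 ≤ y → a * x + b * y ≤ n →
      Δ x = Δ y → Δ y = Δ (a * x + b * y) → False := by
    intro x y hx hy hz e1 e2
    have hxn : x ≤ n :=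
      le_trans (le_trans (Nat.le_mul_of_pos_left x ha) (Nat.le_add_right _ _)) hz
    have hyn : y ≤ n :=
      le_trans (le_trans (Nat.le_mul_of_pos_left y hb) (Nat.le_add_left _ _)) hz
    have hz1 : 1 ≤ a * x + b * y := le_trans (Nat.mul_pos ha hx) (Nat.le_add_right _ _)
    exact hno ⟨x, Finset.mem_Icc.mpr ⟨hx, hxn⟩, y, Finset.mem_Icc.mpr ⟨hy, hyn⟩,
      a * x + b * y, Finset.mem_Icc.mpr ⟨hz1, hz⟩, rfl, e1, e2⟩
  have hZn : ∀ q : ℕ, q ≤ 2 * a + b → a * b * q ≤ n := by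
    intro q hq
    calc a * b * q ≤ a * b * (2 * a + b) := Nat.mul_le_mul_left _ hq
      _ ≤ a * (a + b) ^ 2 := by
          linarith [show a * a * a + a * b * (2 * a + b) = a * (a + b) ^ 2 from by ring,
            Nat.zero_le (a * a * a)]
      _ ≤ n := le_trans (Nat.le_add_right _ _) hn
  have main : ∀ j : ℕ, 1 ≤ j → j ≤ a → Δ (j * a) = 1 := by
    intro j hj1
    induction j, hj1 using Nat.le_induction with
    | base => intro _; simpa using hΔa
    | succ j hj ih =>
      intro hja
      have hprev : Δ (j * a) = 1 := ih (le_trans (Nat.le_succ j) hja)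
      by_contra hk
      obtain ⟨s, hs1, hsa⟩ : ∃ s, 1 ≤ s ∧ j + s = a := ⟨a - j, by omega, by omega⟩
      have hkan : (j + 1) * a ≤ n := by
        calc (j + 1) * a ≤ a * a := Nat.mul_le_mul_right a hja
          _ ≤ a * (a + b) ^ 2 := Nat.mul_le_mul_left a
              (le_trans (Nat.le_add_right a b) (Nat.le_self_pow two_ne_zero _))
          _ ≤ n := le_trans (Nat.le_add_right _ _) hn
      have hk0 : Δ ((j + 1) * a) = 0 := by
        rcases hc ((j + 1) * a) (Nat.mul_pos (by omega) ha) hkan with h | h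
        · exact h
        · exact absurd h hk
      -- up-step : from Δ(p b)=1 (p+1 ≤ a+b) deduce Δ((p+s) b)=1
      have hup : ∀ p : ℕ, 1 ≤ p → p + 1 ≤ a + b → Δ (p * b) = 1 →
          Δ ((p + s) * b) = 1 := by
        intro p hp1 hpv hgp
        have hZ : a * (p * b) + b * (a ^ 2 + a) = a * b * (p + a + 1) := by ring
        have hZle : a * b * (p + a + 1) ≤ n := hZn _ (by omega)
        have hsum : a * (p * b) + b * (a ^ 2 + a) ≤ n := by rw [hZ]; exact hZle
        have hZ0 : Δ (a * b * (p + a + 1)) = 0 := by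
          rcases hc _ (Nat.mul_pos (Nat.mul_pos ha hb) (by omega)) hZle with h | h
          · exact h
          · exfalso
            exact key (p * b) (a ^ 2 + a) (Nat.mul_pos hp1 hb)
              (le_trans ha (Nat.le_add_left a (a ^ 2))) hsum
              (by rw [hgp, hsq]) (by rw [hZ, hsq, h])
        have e1 : a * ((p + s) * b) + b * ((j + 1) * a) = a * b * (p + a + 1) := by
          have hps : p + s + (j + 1) = p + a + 1 := by omega
          calc a * ((p + s) * b) + b * ((j + 1) * a) = a * b * (p + s + (j + 1)) := by ring
            _ = a * b * (p + a + 1) := by rw [hps]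
        have hsum2 : a * ((p + s) * b) + b * ((j + 1) * a) ≤ n := by rw [e1]; exact hZle
        rcases hc ((p + s) * b) (Nat.mul_pos (by omega) hb)
            (le_trans (le_trans (Nat.le_mul_of_pos_left _ ha) (Nat.le_add_right _ _)) hsum2)
            with h | h
        · exfalso
          exact key ((p + s) * b) ((j + 1) * a) (Nat.mul_pos (by omega) hb)
            (Nat.mul_pos (by omega) ha) hsum2 (by rw [h, hk0]) (by rw [e1, hk0, hZ0])
        · exact h
      -- down-step : from Δ((p+1) b)=1 (p+1 ≤ a+b+s) deduce Δ(p b)=1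
      have hdown : ∀ p : ℕ, 1 ≤ p → p + 1 ≤ a + b + s → Δ ((p + 1) * b) = 1 →
          Δ (p * b) = 1 := by
        intro p hp1 hps hgp
        have hZ : a * ((p + 1) * b) + b * (j * a) = a * b * (p + 1 + j) := by ring
        have hZle : a * b * (p + 1 + j) ≤ n := hZn _ (by omega)
        have hsum : a * ((p + 1) * b) + b * (j * a) ≤ n := by rw [hZ]; exact hZle
        have hZ0 : Δ (a * b * (p + 1 + j)) = 0 := by
          rcases hc _ (Nat.mul_pos (Nat.mul_pos ha hb) (by omega)) hZle with h | h
          · exact h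
          · exfalso
            exact key ((p + 1) * b) (j * a) (Nat.mul_pos (by omega) hb)
              (Nat.mul_pos hj ha) hsum (by rw [hgp, hprev]) (by rw [hZ, hprev, h])
        have e1 : a * (p * b) + b * ((j + 1) * a) = a * b * (p + 1 + j) := by ring
        have hsum2 : a * (p * b) + b * ((j + 1) * a) ≤ n := by rw [e1]; exact hZle
        rcases hc (p * b) (Nat.mul_pos hp1 hb)
            (le_trans (le_trans (Nat.le_mul_of_pos_left _ ha) (Nat.le_add_right _ _)) hsum2)
            with h | h
        · exfalso
          exact key (p * b) ((j + 1) * a) (Nat.mul_pos hp1 hb)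
            (Nat.mul_pos (by omega) ha) hsum2 (by rw [h, hk0]) (by rw [e1, hk0, hZ0])
        · exact h
      -- climb
      have hclimb : ∀ m p : ℕ, 1 ≤ p → Δ (p * b) = 1 → p + m * s + 1 ≤ a + b + s →
          Δ ((p + m * s) * b) = 1 := by
        intro m
        induction m with
        | zero => intro p _ hg _; simpa using hg
        | succ m ihm =>
          intro p hp hg hbound
          have hms : (m + 1) * s = m * s + s := by ring
          rw [hms] at hbound
          have hcond : p + 1 ≤ a + b := by linarith [Nat.zero_le (m * s)]
          have h1 : Δ ((p + s) * b) = 1 := hup p hp hcond hg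
          have h2 : Δ ((p + s + m * s) * b) = 1 := ihm (p + s) (by omega) h1 (by linarith)
          have e : p + (m + 1) * s = p + s + m * s := by ring
          rw [e]
          exact h2
      -- descend
      have hdesc : ∀ d p : ℕ, 1 ≤ p → p + d + 1 ≤ a + b + s → Δ ((p + d) * b) = 1 →
          Δ (p * b) = 1 := by
        intro d
        induction d with
        | zero => intro p _ _ hg; simpa using hg
        | succ d ihd =>
          intro p hp hbd hg
          exact ihd p hp (by omega) (hdown (p + d) (by omega) (by omega) hg)
      have hgb : Δ (1 * b) = 1 := by rw [one_mul]; exact hΔb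
      obtain ⟨q, r, hdm, hrs⟩ : ∃ q r, s * q + r = a + b - 2 ∧ r < s :=
        ⟨(a + b - 2) / s, (a + b - 2) % s, Nat.div_add_mod _ _, Nat.mod_lt _ (by omega)⟩
      obtain ⟨T, hT⟩ : ∃ T, T = s * q := ⟨s * q, rfl⟩
      have hqs : (q + 1) * s = T + s := by rw [hT]; ring
      have hdm' : T + r = a + b - 2 := by rw [hT]; exact hdm
      have hstart : Δ ((1 + (q + 1) * s) * b) = 1 := by
        apply hclimb (q + 1) 1 le_rfl hgb
        rw [hqs]; omega
      have hP : 1 + (q + 1) * s = a + b + (1 + T + s - (a + b)) := by rw [hqs]; omega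
      have hdle : a + b + (1 + T + s - (a + b)) + 1 ≤ a + b + s := by omega
      have hgv : Δ ((a + b) * b) = 1 := by
        apply hdesc (1 + T + s - (a + b)) (a + b) (by omega) hdle
        rw [← hP]
        exact hstart
      have hsumb : a * b + b * b ≤ n := by
        have f1 : a * b ≤ a * (a * b) := Nat.le_mul_of_pos_left _ ha
        have f2 : b * b ≤ a * (b * b) := Nat.le_mul_of_pos_left _ ha
        have e : a * a * a + (a * (a * b) + a * (a * b)) + a * (b * b) = a * (a + b) ^ 2 := by
          ring
        linarith [Nat.zero_le (a * a * a), Nat.zero_le (a * (a * b))]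
      exact key b b hb hb hsumb rfl
        (by rw [hΔb, show a * b + b * b = (a + b) * b by ring, hgv])
  intro j hj
  rcases Finset.mem_Icc.mp hj with ⟨hj1, hj2⟩
  exact main j hj1 hj2
end

section
/- Let a, b, n be positive integers with a ≤ b, v = a + b, a not dividing b·(b−1), and n ≥ a·v² + b. Suppose Δ : [1,n] → {0,1} is a 2-coloring with Δ(1) = 0 and Δ(a) = Δ(b) = 1 such that a·x + b·y = z has no monochromatic solution in [1,n]. If w ∈ [1,n], h ∈ ℕ, w + h·b ≤ a·v + b, and Δ(w) = 0, then Δ(w + h·b) = 0. -/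
theorem claim42 (a b n : ℕ) (ha : 0 < a) (hab : a ≤ b) (hndvd : ¬ a ∣ b * (b - 1))
    (hn : a * (a + b) ^ 2 + b ≤ n)
    (Δ : ℕ → ℕ) (hΔ : ∀ i ∈ Finset.Icc 1 n, Δ i ≤ 1)
    (h1 : Δ 1 = 0) (hΔa : Δ a = 1) (hΔb : Δ b = 1)
    (hno : ¬ ∃ x ∈ Finset.Icc 1 n, ∃ y ∈ Finset.Icc 1 n, ∃ z ∈ Finset.Icc 1 n,
      a * x + b * y = z ∧ Δ x = Δ y ∧ Δ y = Δ z)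
    (w h : ℕ) (hw : w ∈ Finset.Icc 1 n)
    (hwh : w + h * b ≤ a * (a + b) + b) (hΔw : Δ w = 0) :
    Δ (w + h * b) = 0 := by
  obtain ⟨hw1, hwn⟩ := Finset.mem_Icc.mp hw
  have hb : 0 < b := lt_of_lt_of_le ha hab
  have hv1 : 1 ≤ a + b := by omega
  have hsq : a + b ≤ (a + b) ^ 2 := by nlinarith
  have hA0sq : a * (a + b) ≤ a * (a + b) ^ 2 := Nat.mul_le_mul (Nat.le_refl a) hsq
  have hA0n : a * (a + b) ≤ n := by omega
  have hA01 : 1 ≤ a * (a + b) := Nat.mul_pos ha (by omega)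
  have han : a ≤ n := by nlinarith
  have noM : ∀ x y z : ℕ, 1 ≤ x → x ≤ n → 1 ≤ y → y ≤ n → 1 ≤ z → z ≤ n →
      a * x + b * y = z → ¬(Δ x = Δ y ∧ Δ y = Δ z) := by
    intro x y z hx1 hxn hy1 hyn hz1 hzn heq hcon
    exact hno ⟨x, Finset.mem_Icc.mpr ⟨hx1, hxn⟩, y, Finset.mem_Icc.mpr ⟨hy1, hyn⟩,
      z, Finset.mem_Icc.mpr ⟨hz1, hzn⟩, heq, hcon.1, hcon.2⟩
  have base : Δ (a * (a + b)) = 0 := by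
    have hle := hΔ (a * (a + b)) (Finset.mem_Icc.mpr ⟨hA01, hA0n⟩)
    have hm := noM a a (a * (a + b)) ha han ha han hA01 hA0n (by ring)
    omega
  have key : ∀ u, 1 ≤ u → u ≤ a * (a + b) → Δ u = 0 → Δ (u + b) = 0 := by
    intro u hu1 hu hΔu
    have hun : u ≤ n := le_trans hu hA0n
    have hubn : u + b ≤ n := by omega
    by_contra hne
    have hub1 : Δ (u + b) = 1 := by
      have := hΔ (u + b) (Finset.mem_Icc.mpr ⟨by omega, hubn⟩); omega
    have desc : ∀ j, j ≤ a + b - 1 → Δ (a * (a + b - j)) = 0 := by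
      intro j
      induction j with
      | zero => intro _; simpa using base
      | succ k ih =>
        intro hk
        have hX : Δ (a * (a + b - k)) = 0 := ih (by omega)
        obtain ⟨m, hm⟩ : ∃ m, a + b = m + (k + 1) := ⟨a + b - (k + 1), by omega⟩
        have hm1 : a + b - k = m + 1 := by omega
        have hm2 : a + b - (k + 1) = m := by omega
        rw [hm1] at hX
        rw [hm2]
        have hXle : a * (m + 1) ≤ a * (a + b) := Nat.mul_le_mul (Nat.le_refl a) (by omega)
        have hX1 : 1 ≤ a * (m + 1) := Nat.mul_pos ha (by omega)
        have hau : 1 ≤ a * u := Nat.mul_pos ha hu1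
        have hz1 : 1 ≤ a * u + b * (a * (m + 1)) := by omega
        have hzn : a * u + b * (a * (m + 1)) ≤ n := by
          have h1' : a * u ≤ a * (a * (a + b)) := Nat.mul_le_mul (Nat.le_refl a) hu
          have h2' : b * (a * (m + 1)) ≤ b * (a * (a + b)) :=
            Nat.mul_le_mul (Nat.le_refl b) hXle
          have h3' : a * (a * (a + b)) + b * (a * (a + b)) = a * (a + b) ^ 2 := by ring
          omega
        have hzc : Δ (a * u + b * (a * (m + 1))) = 1 := by
          have hle := hΔ (a * u + b * (a * (m + 1))) (Finset.mem_Icc.mpr ⟨hz1, hzn⟩)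
          have hm' := noM u (a * (m + 1)) (a * u + b * (a * (m + 1)))
            hu1 hun hX1 (le_trans hXle hA0n) hz1 hzn rfl
          omega
        have hm1' : 1 ≤ a * m := Nat.mul_pos ha (by omega)
        have hmn : a * m ≤ n :=
          le_trans (le_trans (Nat.mul_le_mul (Nat.le_refl a) (by omega : m ≤ a + b)) (le_refl _)) hA0n
        have heq2 : a * (u + b) + b * (a * m) = a * u + b * (a * (m + 1)) := by ring
        have hm'' := noM (u + b) (a * m) (a * u + b * (a * (m + 1)))
          (by omega) hubn hm1' hmn hz1 hzn heq2
        have hle2 := hΔ (a * m) (Finset.mem_Icc.mpr ⟨hm1', hmn⟩)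
        omega
    have hfin := desc (a + b - 1) le_rfl
    have he : a + b - (a + b - 1) = 1 := by omega
    rw [he, mul_one] at hfin
    omega
  clear hw
  revert hwh
  induction h with
  | zero => intro _; simpa using hΔw
  | succ k ih =>
    intro hwh
    rw [Nat.succ_mul] at hwh
    have h0 : Δ (w + k * b) = 0 := ih (by omega)
    have h2 := key (w + k * b) (by omega) (by omega) h0
    rw [Nat.succ_mul, ← Nat.add_assoc]
    exact h2
end

section
/- Let a, b, n be positive integers with a ≤ b, v = a + b, a not dividing b·(b−1), and n ≥ a·v² + b. Write b = a·q + r with 0 ≤ r < a. Suppose Δ : [1,n] → {0,1} is a 2-coloring with Δ(1) = 0 and Δ(a) = Δ(b) = 1 such that a·x + b·y = z has no monochromatic solution in [1,n]. If Δ(r) = 0 then Δ(a²) = 0. -/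
set_option maxHeartbeats 1000000


theorem claim43 (a b n q r : ℕ) (ha : 0 < a) (hab : a ≤ b)
    (hndvd : ¬ a ∣ b * (b - 1)) (hn : a * (a + b) ^ 2 + b ≤ n)
    (hqr : b = a * q + r) (hr : r < a)
    (Δ : ℕ → ℕ) (hΔ : ∀ i ∈ Finset.Icc 1 n, Δ i ≤ 1)
    (h1 : Δ 1 = 0) (hΔa : Δ a = 1) (hΔb : Δ b = 1)
    (hno : ¬ ∃ x ∈ Finset.Icc 1 n, ∃ y ∈ Finset.Icc 1 n, ∃ z ∈ Finset.Icc 1 n,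
      a * x + b * y = z ∧ Δ x = Δ y ∧ Δ y = Δ z)
    (hΔr : Δ r = 0) :
    Δ (a ^ 2) = 0 := by
  have hb : 0 < b := lt_of_lt_of_le ha hab
  have hr1 : 1 ≤ r := by
    rcases Nat.eq_zero_or_pos r with h | h
    · exfalso
      apply hndvd
      exact Dvd.dvd.mul_right ⟨q, by omega⟩ (b - 1)
    · exact h
  have hn' : a^3 + 2*(a^2*b) + a*b^2 + b ≤ n := by
    have h := hn; ring_nf at h ⊢; linarith
  have hA2 : 1 ≤ a^2 := Nat.one_le_pow _ _ ha
  have h2 : a^2 ≤ a^3 := Nat.pow_le_pow_right ha (by norm_num)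
  have haa2 : a ≤ a^2 := Nat.le_self_pow (by norm_num) a
  have h3 : a*b ≤ a^2*b := Nat.mul_le_mul_right _ haa2
  have h4 : b^2 ≤ a*b^2 := Nat.le_mul_of_pos_left _ ha
  have h2a : a ≤ a^3 := le_trans haa2 h2
  have h1n : 1 ≤ n := by linarith [Nat.zero_le (a^3), Nat.zero_le (a^2*b), Nat.zero_le (a*b^2), Nat.zero_le b, Nat.zero_le a]
  have hbn : b ≤ n := by linarith [Nat.zero_le (a^3), Nat.zero_le (a^2*b), Nat.zero_le (a*b^2), Nat.zero_le b, Nat.zero_le a]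
  have han : a ≤ n := by linarith [Nat.zero_le (a^3), Nat.zero_le (a^2*b), Nat.zero_le (a*b^2), Nat.zero_le b, Nat.zero_le a]
  have ha2n : a^2 ≤ n := by linarith [Nat.zero_le (a^3), Nat.zero_le (a^2*b), Nat.zero_le (a*b^2), Nat.zero_le b, Nat.zero_le a]
  have hrn : r ≤ n := by linarith [Nat.zero_le (a^3), Nat.zero_le (a^2*b), Nat.zero_le (a*b^2), Nat.zero_le b, Nat.zero_le a]
  have hvn : a + b ≤ n := by linarith [Nat.zero_le (a^3), Nat.zero_le (a^2*b), Nat.zero_le (a*b^2), Nat.zero_le b, Nat.zero_le a]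
  have hXle : ∀ s : ℕ, s ≤ a + b → a^2 + s*b ≤ n := by
    intro s hs
    have h5 : s*b ≤ (a+b)*b := Nat.mul_le_mul_right _ hs
    have h6 : (a+b)*b = a*b + b^2 := by ring
    linarith [Nat.zero_le (a^2*b), Nat.zero_le (s*b)]
  have hz1le : ∀ s : ℕ, s ≤ a + b → a*(a^2 + s*b) + b*r ≤ n := by
    intro s hs
    have h5 : a*(s*b) ≤ a*((a+b)*b) := Nat.mul_le_mul_left _ (Nat.mul_le_mul_right _ hs)
    have h6 : a*((a+b)*b) = a^2*b + a*b^2 := by ring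
    have h7 : b*r ≤ b*a := Nat.mul_le_mul_left _ (le_of_lt hr)
    have h8 : b*a = a*b := by ring
    have h9 : a*(a^2 + s*b) = a^3 + a*(s*b) := by ring
    linarith [Nat.zero_le (a*(s*b)), Nat.zero_le (a^2*b), Nat.zero_le b]
  have hz2le : ∀ s : ℕ, s + 1 ≤ a → a*(a^2 + (s+1)*b) + b*(a^2 + a*b) ≤ n := by
    intro s hs
    have h5 : a*((s+1)*b) ≤ a*(a*b) := Nat.mul_le_mul_left _ (Nat.mul_le_mul_right _ hs)
    have h6 : a*(a*b) = a^2*b := by ring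
    have h9 : a*(a^2 + (s+1)*b) = a^3 + a*((s+1)*b) := by ring
    have h10 : b*(a^2 + a*b) = a^2*b + a*b^2 := by ring
    linarith [Nat.zero_le (a*((s+1)*b)), Nat.zero_le b]
  have hXpos : ∀ s : ℕ, 1 ≤ a^2 + s*b := fun s => le_trans hA2 (Nat.le_add_right _ _)
  have hzpos : ∀ x y : ℕ, 1 ≤ x → 1 ≤ a*x + b*y := by
    intro x y hx
    have h5 : 1*1 ≤ a*x := Nat.mul_le_mul ha hx
    simp at h5
    exact le_trans h5 (Nat.le_add_right _ _)
  have hmem : ∀ m : ℕ, 1 ≤ m → m ≤ n → m ∈ Finset.Icc 1 n :=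
    fun m hm1 hm2 => Finset.mem_Icc.mpr ⟨hm1, hm2⟩
  have hblock : ∀ x y z : ℕ, 1 ≤ x → x ≤ n → 1 ≤ y → y ≤ n → 1 ≤ z → z ≤ n →
      a*x + b*y = z → ¬(Δ x = Δ y ∧ Δ y = Δ z) := by
    intro x y z hx1 hx2 hy1 hy2 hz1 hz2 heq hc
    exact hno ⟨x, hmem x hx1 hx2, y, hmem y hy1 hy2, z, hmem z hz1 hz2, heq, hc⟩
  have rule0 : ∀ x y z : ℕ, 1 ≤ x → x ≤ n → 1 ≤ y → y ≤ n → 1 ≤ z → z ≤ n →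
      a*x + b*y = z → Δ x = 0 → Δ y = 0 → Δ z = 1 := by
    intro x y z hx1 hx2 hy1 hy2 hz1 hz2 heq hdx hdy
    have h := hblock x y z hx1 hx2 hy1 hy2 hz1 hz2 heq
    have hz := hΔ z (hmem z hz1 hz2)
    rcases Nat.eq_zero_or_pos (Δ z) with h0 | h0
    · exact absurd ⟨by omega, by omega⟩ h
    · omega
  have rule1 : ∀ x y z : ℕ, 1 ≤ x → x ≤ n → 1 ≤ y → y ≤ n → 1 ≤ z → z ≤ n →
      a*x + b*y = z → Δ x = 1 → Δ y = 1 → Δ z = 0 := by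
    intro x y z hx1 hx2 hy1 hy2 hz1 hz2 heq hdx hdy
    have h := hblock x y z hx1 hx2 hy1 hy2 hz1 hz2 heq
    have hz := hΔ z (hmem z hz1 hz2)
    rcases Nat.eq_zero_or_pos (Δ z) with h0 | h0
    · exact h0
    · exact absurd ⟨by omega, by omega⟩ h
  have ruleX : ∀ x y z : ℕ, 1 ≤ x → x ≤ n → 1 ≤ y → y ≤ n → 1 ≤ z → z ≤ n →
      a*x + b*y = z → Δ y = 1 → Δ z = 1 → Δ x = 0 := by
    intro x y z hx1 hx2 hy1 hy2 hz1 hz2 heq hdy hdz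
    have h := hblock x y z hx1 hx2 hy1 hy2 hz1 hz2 heq
    have hx := hΔ x (hmem x hx1 hx2)
    rcases Nat.eq_zero_or_pos (Δ x) with h0 | h0
    · exact h0
    · exact absurd ⟨by omega, by omega⟩ h
  -- main case split
  by_cases hA : Δ (a^2) = 0
  · exact hA
  have hA1 : Δ (a^2) = 1 := by
    have := hΔ (a^2) (hmem _ hA2 ha2n)
    omega
  -- basic forced colors
  have hv1 : Δ (a + b) = 1 := by
    apply rule0 1 1 (a+b) le_rfl h1n le_rfl h1n (by omega) hvn (by ring) h1 h1
  have hav0 : Δ (a^2 + a*b) = 0 := by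
    apply rule1 a a (a^2 + a*b) ha han ha han
      (hXpos a) (hXle a (Nat.le_add_right _ _)) (by ring) hΔa hΔa
  -- downward moves
  have downq : ∀ s : ℕ, s + q ≤ a + b → Δ (a^2 + (s+q)*b) = 0 → Δ (a^2 + s*b) = 0 := by
    intro s hs h0
    have hz1 : Δ (a*(a^2 + (s+q)*b) + b*r) = 1 :=
      rule0 _ r _ (hXpos _) (hXle _ hs) hr1 hrn (hzpos _ _ (hXpos _)) (hz1le _ hs)
        rfl h0 hΔr
    exact ruleX (a^2 + s*b) b _ (hXpos s) (hXle s (by omega)) hb hbn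
      (hzpos _ _ (hXpos _)) (hz1le _ hs) (by rw [hqr]; ring) hΔb hz1
  have downq1 : ∀ s : ℕ, s + (q+1) ≤ a + b → Δ (a^2 + (s+(q+1))*b) = 0 → Δ (a^2 + s*b) = 0 := by
    intro s hs h0
    have hz1 : Δ (a*(a^2 + (s+(q+1))*b) + b*r) = 1 :=
      rule0 _ r _ (hXpos _) (hXle _ hs) hr1 hrn (hzpos _ _ (hXpos _)) (hz1le _ hs)
        rfl h0 hΔr
    exact ruleX (a^2 + s*b) (a+b) _ (hXpos s) (hXle s (by omega)) (by omega) hvn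
      (hzpos _ _ (hXpos _)) (hz1le _ hs) (by rw [hqr]; ring) hv1 hz1
  -- iterated descent
  have iterq : ∀ i s : ℕ, s + i*q ≤ a + b → Δ (a^2 + (s + i*q)*b) = 0 → Δ (a^2 + s*b) = 0 := by
    intro i
    induction i with
    | zero => intro s hs h0; simpa using h0
    | succ i ih =>
      intro s hs h0
      have he : s + (i+1)*q = (s+q) + i*q := by ring
      rw [he] at hs h0
      have hsq : s + q ≤ a + b := le_trans (Nat.le_add_right _ _) hs
      exact downq s hsq (ih (s+q) hs h0)
  have iterq1 : ∀ i s : ℕ, s + i*(q+1) ≤ a + b → Δ (a^2 + (s + i*(q+1))*b) = 0 →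
      Δ (a^2 + s*b) = 0 := by
    intro i
    induction i with
    | zero => intro s hs h0; simpa using h0
    | succ i ih =>
      intro s hs h0
      have he : s + (i+1)*(q+1) = (s+(q+1)) + i*(q+1) := by ring
      rw [he] at hs h0
      have hsq : s + (q+1) ≤ a + b := le_trans (Nat.le_add_right _ _) hs
      exact downq1 s hsq (ih (s+(q+1)) hs h0)
  -- one full step: t+1 ↦ t
  have step : ∀ s : ℕ, s + 1 ≤ a → Δ (a^2 + (s+1)*b) = 0 → Δ (a^2 + s*b) = 0 := by
    intro s hs h0
    obtain ⟨c, hc⟩ : ∃ c, a = c + (r+1) := ⟨a - (r+1), by omega⟩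
    have hz2 : Δ (a*(a^2 + (s+1)*b) + b*(a^2 + a*b)) = 1 := by
      apply rule0 _ _ _ (hXpos _) (hXle (s+1) (by omega)) (hXpos a)
        (hXle a (Nat.le_add_right _ _)) (hzpos _ _ (hXpos _)) (hz2le s hs)
        rfl h0 hav0
    have hx1 : Δ (a^2 + ((s+1)+b)*b) = 0 := by
      apply ruleX _ (a^2) _ (hXpos _) (hXle ((s+1)+b) (by omega)) hA2 ha2n
        (hzpos _ _ (hXpos _)) (hz2le s hs) (by ring) hA1 hz2
    have harr : (s+1) + b = (s + c*q) + (r+1)*(q+1) := by rw [hqr, hc]; ring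
    rw [harr] at hx1
    have hb1 : (s + c*q) + (r+1)*(q+1) ≤ a + b := by rw [← harr]; omega
    have h2' := iterq1 (r+1) (s + c*q) hb1 hx1
    have hb2 : s + c*q ≤ a + b := le_trans (Nat.le_add_right _ _) hb1
    exact iterq c s hb2 h2'
  -- main induction
  have main : ∀ d : ℕ, d ≤ a → Δ (a^2 + (a - d)*b) = 0 := by
    intro d
    induction d with
    | zero => intro _; simpa using hav0
    | succ d ih =>
      intro hd
      have h0 := ih (by omega)
      have he : a - d = (a - (d+1)) + 1 := by omega
      rw [he] at h0
      exact step (a - (d+1)) (by omega) h0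
  have hfin := main a le_rfl
  simp at hfin
  omega
end
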